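/- arXiv:2309.02802 — 4 statements merged into one kernel-verified Lean document; each statement's English description precedes it below -/
import Mathlib

section
/- Let $d\ge1$, $k\ge0$, $B\ge1$ be integers, let $0\le m\le d-1$, and let $\vec l^0,\dots,\vec l^k\in\mathbb Z^d$ satisfy $|l^s_i|\le B$ for all $s,i$, with $l^k_m\neq 0$ and $l^k_i=0$ for all $i>m$. For an integer $A$ define $\xi(A)\in\mathbb R^d$ by $\xi(A)_i=\sum_{s=0}^{k}l^s_i\,A^{sd+i+1}$, $0\le i\le d-1$. Then there exist $A_0$ and $C$, depending only on $d$, $k$ and $B$, such that for all $A\ge A_0$ one has $\xi(A)\neq0$ and, for every $1\le j\le d$, $\big|\tilde m_j(\xi(A))-\epsilon_j\big|\le C/A$, where $\tilde m_j(\xi)=-i\,\xi_{j-1}/|\xi|$ (coordinates indexed $0,\dots,d-1$), $\epsilon_j=-i\,\mathrm{sign}(l^k_m)$ if $j-1=m$, and $\epsilon_j=0$ if $j-1\neq m$. -/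
open MeasureTheory

/-- The Riesz multiplier `m̃_j(ξ) = -i ξ_j / |ξ|` on `ℝ^d` (and `0` at `ξ = 0`);
coordinates are indexed `0, …, d-1`, so `j : Fin d` is `j - 1` of the paper's
1-based indexing. -/
noncomputable def rieszMultR {d : ℕ} (j : Fin d) (ξ : Fin d → ℝ) : ℂ :=
  if ξ = 0 then 0
  else -Complex.I * (ξ j : ℂ) / (Real.sqrt (∑ i, (ξ i) ^ 2) : ℂ)

set_option maxHeartbeats 1000000 in
/-- for frequencies `l⁰, …, lᵏ ∈ ℤ^d` bounded by `B`, with `l^k_m ≠ 0`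
and `l^k_i = 0` for `i > m`, and `ξ(A)_i = ∑_s l^s_i A^{sd+i+1}`, there are `A₀, C`
(depending only on `d`, `k`, `B`) such that for all `A ≥ A₀`: `ξ(A) ≠ 0` and
`|m̃_j(ξ(A)) - ε_j| ≤ C/A` for every `j`, where `ε_j = -i sign(l^k_m)` if `j = m`
and `ε_j = 0` otherwise. -/
theorem riesz_multiplier_modulation_estimate (d k B : ℕ) (hd : 1 ≤ d) (hB : 1 ≤ B) :
    ∃ (A₀ : ℕ) (C : ℝ), ∀ (m : Fin d) (l : Fin (k + 1) → Fin d → ℤ),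
      (∀ (s : Fin (k + 1)) (i : Fin d), |l s i| ≤ (B : ℤ)) →
      l (Fin.last k) m ≠ 0 →
      (∀ i : Fin d, m < i → l (Fin.last k) i = 0) →
      ∀ A : ℕ, A₀ ≤ A →
        (fun i : Fin d =>
            ∑ s : Fin (k + 1), (l s i : ℝ) * (A : ℝ) ^ ((s : ℕ) * d + (i : ℕ) + 1)) ≠ 0 ∧
        ∀ j : Fin d,
          ‖rieszMultR j
              (fun i : Fin d =>
                ∑ s : Fin (k + 1), (l s i : ℝ) * (A : ℝ) ^ ((s : ℕ) * d + (i : ℕ) + 1))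
            - (if j = m then -Complex.I * ((l (Fin.last k) m).sign : ℂ) else 0)‖
            ≤ C / A := by
  refine ⟨2 * (k + 1) * B + 2, 4 * d * ((k + 1) * B) ^ 2, ?_⟩
  intro m l hl hc0 hup A hA
  set c : ℤ := l (Fin.last k) m with hcdef
  set M : ℕ := k * d + (m : ℕ) with hMdef
  set ξ : Fin d → ℝ := fun i : Fin d =>
      ∑ s : Fin (k + 1), (l s i : ℝ) * (A : ℝ) ^ ((s : ℕ) * d + (i : ℕ) + 1) with hξdef
  -- basic facts about A
  have hA2 : ((2 * (k + 1) * B + 2 : ℕ) : ℝ) ≤ (A : ℝ) := Nat.cast_le.mpr hA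
  push_cast at hA2
  have hBk0 : (0:ℝ) ≤ (k:ℝ) * B := by positivity
  have hB1 : (1:ℝ) ≤ (B:ℝ) := by exact_mod_cast hB
  have hd1 : (1:ℝ) ≤ (d:ℝ) := by exact_mod_cast hd
  have hA1 : (1 : ℝ) ≤ (A : ℝ) := by nlinarith
  have hApos : (0 : ℝ) < (A : ℝ) := lt_of_lt_of_le one_pos hA1
  have hAM : (0 : ℝ) < (A : ℝ) ^ M := pow_pos hApos M
  have hAM1 : (0 : ℝ) < (A : ℝ) ^ (M + 1) := pow_pos hApos (M + 1)
  have hkB : (k : ℝ) * B ≤ (A : ℝ) / 2 := by nlinarith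
  -- coefficient bound, cast
  have hlR : ∀ (s : Fin (k + 1)) (i : Fin d), |(l s i : ℝ)| ≤ (B : ℝ) := by
    intro s i
    have := hl s i
    exact_mod_cast this
  -- key1: leading coefficient extraction at coordinate m
  have key1 : |ξ m - (c : ℝ) * (A : ℝ) ^ (M + 1)| ≤ (k : ℝ) * B * (A : ℝ) ^ M := by
    have hsum : ξ m = (∑ s : Fin k,
        (l s.castSucc m : ℝ) * (A : ℝ) ^ ((s : ℕ) * d + (m : ℕ) + 1))
        + (c : ℝ) * (A : ℝ) ^ (M + 1) := by
      simp only [hξdef]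
      rw [Fin.sum_univ_castSucc]
      simp [hcdef, hMdef]
    rw [hsum, add_sub_cancel_right]
    calc |∑ s : Fin k, (l s.castSucc m : ℝ) * (A : ℝ) ^ ((s : ℕ) * d + (m : ℕ) + 1)|
        ≤ ∑ s : Fin k, |(l s.castSucc m : ℝ) * (A : ℝ) ^ ((s : ℕ) * d + (m : ℕ) + 1)| :=
          Finset.abs_sum_le_sum_abs _ _
      _ ≤ ∑ _s : Fin k, (B : ℝ) * (A : ℝ) ^ M := by
          apply Finset.sum_le_sum
          intro s _
          rw [abs_mul, abs_pow, abs_of_pos hApos]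
          have he : (s : ℕ) * d + (m : ℕ) + 1 ≤ M := by
            have h1 : ((s : ℕ) + 1) * d ≤ k * d :=
              Nat.mul_le_mul_right d (Nat.succ_le_of_lt s.isLt)
            have h2 : (s : ℕ) * d + d = ((s : ℕ) + 1) * d := by ring
            rw [hMdef]; linarith
          have hpow := pow_le_pow_right₀ hA1 he
          exact mul_le_mul (hlR s.castSucc m) hpow (by positivity) (by positivity)
      _ = (k : ℝ) * B * (A : ℝ) ^ M := by
          rw [Finset.sum_const, Finset.card_univ, Fintype.card_fin, nsmul_eq_mul]; ring
  -- key2: all other coordinates are lower order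
  have key2 : ∀ i : Fin d, i ≠ m → |ξ i| ≤ ((k : ℝ) + 1) * B * (A : ℝ) ^ M := by
    intro i hi
    have hterm : ∀ s : Fin (k + 1),
        |(l s i : ℝ) * (A : ℝ) ^ ((s : ℕ) * d + (i : ℕ) + 1)| ≤ (B : ℝ) * (A : ℝ) ^ M := by
      intro s
      rcases hi.lt_or_gt with h | h
      · -- i < m
        rw [abs_mul, abs_pow, abs_of_pos hApos]
        have he : (s : ℕ) * d + (i : ℕ) + 1 ≤ M := by
          have h1 : (s : ℕ) * d ≤ k * d := Nat.mul_le_mul_right d (Nat.lt_succ_iff.mp s.isLt)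
          have h2 : (i : ℕ) + 1 ≤ (m : ℕ) := h
          rw [hMdef]; linarith
        have hpow := pow_le_pow_right₀ hA1 he
        exact mul_le_mul (hlR s i) hpow (by positivity) (by positivity)
      · -- m < i
        by_cases hs : s = Fin.last k
        · rw [hs, hup i h]
          simp
          positivity
        · have hsk : (s : ℕ) < k := Fin.val_lt_last hs
          rw [abs_mul, abs_pow, abs_of_pos hApos]
          have he : (s : ℕ) * d + (i : ℕ) + 1 ≤ M := by
            have h1 : ((s : ℕ) + 1) * d ≤ k * d :=
              Nat.mul_le_mul_right d (Nat.succ_le_of_lt hsk)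
            have h2 : (s : ℕ) * d + d = ((s : ℕ) + 1) * d := by ring
            have h3 : (i : ℕ) + 1 ≤ d := i.isLt
            rw [hMdef]; linarith
          have hpow := pow_le_pow_right₀ hA1 he
          exact mul_le_mul (hlR s i) hpow (by positivity) (by positivity)
    calc |ξ i| ≤ ∑ s : Fin (k + 1), |(l s i : ℝ) * (A : ℝ) ^ ((s : ℕ) * d + (i : ℕ) + 1)| :=
          Finset.abs_sum_le_sum_abs _ _
      _ ≤ ∑ _s : Fin (k + 1), (B : ℝ) * (A : ℝ) ^ M :=
          Finset.sum_le_sum fun s _ => hterm s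
      _ = ((k : ℝ) + 1) * B * (A : ℝ) ^ M := by
          rw [Finset.sum_const, Finset.card_univ, Fintype.card_fin, nsmul_eq_mul]
          push_cast; ring
  -- sign facts
  have hsign : c.sign = 1 ∨ c.sign = -1 := by
    rcases lt_trichotomy c 0 with h | h | h
    · right; exact Int.sign_eq_neg_one_of_neg h
    · exact absurd h hc0
    · left; exact Int.sign_eq_one_of_pos h
  have hσabs : |((c.sign : ℤ) : ℝ)| = 1 := by
    rcases hsign with h | h <;> rw [h] <;> norm_num
  have hσc : (1 : ℝ) ≤ ((c.sign : ℤ) : ℝ) * (c : ℝ) := by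
    have h1 : (1 : ℤ) ≤ c.sign * c := by
      rcases lt_trichotomy c 0 with h | h | h
      · rw [Int.sign_eq_neg_one_of_neg h]; omega
      · exact absurd h hc0
      · rw [Int.sign_eq_one_of_pos h]; omega
    exact_mod_cast h1
  -- lower bound for σ * ξ m
  have hhalf : (A : ℝ) ^ (M + 1) / 2 ≤ ((c.sign : ℤ) : ℝ) * ξ m := by
    have h2 : -((k : ℝ) * B * (A : ℝ) ^ M)
        ≤ ((c.sign : ℤ) : ℝ) * (ξ m - (c : ℝ) * (A : ℝ) ^ (M + 1)) := by
      have hle := neg_abs_le (((c.sign : ℤ) : ℝ) * (ξ m - (c : ℝ) * (A : ℝ) ^ (M + 1)))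
      rw [abs_mul, hσabs, one_mul] at hle
      linarith [key1]
    have h3 : (A : ℝ) ^ (M + 1) ≤ ((c.sign : ℤ) : ℝ) * (c : ℝ) * (A : ℝ) ^ (M + 1) :=
      le_mul_of_one_le_left hAM1.le hσc
    have h4 : (k : ℝ) * B * (A : ℝ) ^ M ≤ (A : ℝ) ^ (M + 1) / 2 := by
      have h5 : (A : ℝ) ^ (M + 1) = (A : ℝ) ^ M * A := pow_succ _ _
      nlinarith
    nlinarith
  have hpos : 0 < ((c.sign : ℤ) : ℝ) * ξ m := lt_of_lt_of_le (by positivity) hhalf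
  have habs : |ξ m| = ((c.sign : ℤ) : ℝ) * ξ m := by
    rw [← abs_of_pos hpos, abs_mul, hσabs, one_mul]
  have hξm_pos : 0 < |ξ m| := by rw [habs]; exact hpos
  have hξne : ξ ≠ 0 := by
    intro h
    rw [h] at hξm_pos
    simp at hξm_pos
  -- the norm R
  set R : ℝ := Real.sqrt (∑ i, ξ i ^ 2) with hRdef
  have hsum_nonneg : 0 ≤ ∑ i, ξ i ^ 2 := Finset.sum_nonneg fun i _ => sq_nonneg _
  have hR2 : R ^ 2 = ∑ i, ξ i ^ 2 := Real.sq_sqrt hsum_nonneg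
  have hRj : ∀ j : Fin d, |ξ j| ≤ R := by
    intro j
    have h1 : ξ j ^ 2 ≤ ∑ i, ξ i ^ 2 :=
      Finset.single_le_sum (fun i _ => sq_nonneg (ξ i)) (Finset.mem_univ j)
    have := Real.sqrt_le_sqrt h1
    rwa [Real.sqrt_sq_eq_abs] at this
  have hRpos : 0 < R := lt_of_lt_of_le hξm_pos (hRj m)
  have hRlow : (A : ℝ) ^ (M + 1) / 2 ≤ R := by
    refine le_trans ?_ (hRj m)
    rw [habs]; exact hhalf
  -- bound on the off-coordinate mass
  have hS : R ^ 2 - ξ m ^ 2 ≤ (d : ℝ) * (((k : ℝ) + 1) * B * (A : ℝ) ^ M) ^ 2 := by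
    have h1 : R ^ 2 - ξ m ^ 2 = ∑ i ∈ Finset.univ.erase m, ξ i ^ 2 := by
      rw [hR2, ← Finset.sum_erase_add _ _ (Finset.mem_univ m)]
      ring
    rw [h1]
    calc ∑ i ∈ Finset.univ.erase m, ξ i ^ 2
        ≤ ∑ _i ∈ Finset.univ.erase m, (((k : ℝ) + 1) * B * (A : ℝ) ^ M) ^ 2 := by
          apply Finset.sum_le_sum
          intro i hi
          have hi' : i ≠ m := Finset.ne_of_mem_erase hi
          have h2 := key2 i hi'
          nlinarith [abs_nonneg (ξ i), sq_abs (ξ i)]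
      _ = ((Finset.univ.erase m).card : ℝ) * (((k : ℝ) + 1) * B * (A : ℝ) ^ M) ^ 2 := by
          rw [Finset.sum_const, nsmul_eq_mul]
      _ ≤ (d : ℝ) * (((k : ℝ) + 1) * B * (A : ℝ) ^ M) ^ 2 := by
          apply mul_le_mul_of_nonneg_right _ (by positivity)
          have hcard : (Finset.univ.erase m).card ≤ d := by
            calc (Finset.univ.erase m).card ≤ (Finset.univ : Finset (Fin d)).card :=
                  Finset.card_le_card (Finset.erase_subset _ _)
              _ = d := by simp
          exact_mod_cast hcard
  refine ⟨hξne, ?_⟩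
  intro j
  have hRne : (R : ℂ) ≠ 0 := Complex.ofReal_ne_zero.mpr hRpos.ne'
  have hunfold : ∀ j : Fin d, rieszMultR j ξ = -Complex.I * ((ξ j : ℝ) : ℂ) / (R : ℂ) := by
    intro j
    rw [rieszMultR, if_neg hξne, ← hRdef]
  rw [hunfold j]
  by_cases hj : j = m
  · subst hj
    rw [if_pos rfl]
    have heq : -Complex.I * ((ξ j : ℝ) : ℂ) / (R : ℂ) - -Complex.I * ((c.sign : ℤ) : ℂ)
        = -Complex.I * ((ξ j / R - ((c.sign : ℤ) : ℝ) : ℝ) : ℂ) := by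
      push_cast
      field_simp
      ring
    rw [heq, norm_mul, norm_neg, Complex.norm_I, one_mul, Complex.norm_real, Real.norm_eq_abs]
    -- real estimate
    have hσ2 : ((c.sign : ℤ) : ℝ) * ((c.sign : ℤ) : ℝ) = 1 := by
      rcases hsign with h | h <;> rw [h] <;> norm_num
    have hξmeq : ξ j = ((c.sign : ℤ) : ℝ) * |ξ j| := by
      calc ξ j = (((c.sign : ℤ) : ℝ) * ((c.sign : ℤ) : ℝ)) * ξ j := by rw [hσ2]; ring
        _ = ((c.sign : ℤ) : ℝ) * (((c.sign : ℤ) : ℝ) * ξ j) := by ring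
        _ = ((c.sign : ℤ) : ℝ) * |ξ j| := by rw [← habs]
    have hξeq2 : ((c.sign : ℤ) : ℝ) * |ξ j| = ξ j := by
      rw [habs, ← mul_assoc, hσ2, one_mul]
    have h1 : ξ j / R - ((c.sign : ℤ) : ℝ)
        = ((c.sign : ℤ) : ℝ) * ((|ξ j| - R) / R) := by
      have hstep : ((c.sign : ℤ) : ℝ) * ((|ξ j| - R) / R)
          = (((c.sign : ℤ) : ℝ) * |ξ j| - ((c.sign : ℤ) : ℝ) * R) / R := by ring
      rw [hstep, hξeq2, sub_div, mul_div_cancel_right₀ _ hRpos.ne']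
    rw [h1, abs_mul, hσabs, one_mul, abs_div, abs_of_pos hRpos,
      abs_of_nonpos (by linarith [hRj j])]
    have hkey : -(|ξ j| - R) / R ≤ (R ^ 2 - ξ j ^ 2) / R ^ 2 := by
      rw [div_le_div_iff₀ hRpos (by positivity)]
      nlinarith [mul_nonneg (mul_nonneg (abs_nonneg (ξ j)) hRpos.le)
        (sub_nonneg.mpr (hRj j)), sq_abs (ξ j)]
    have hkey2 : (R ^ 2 - ξ j ^ 2) / R ^ 2
        ≤ ((d : ℝ) * (((k : ℝ) + 1) * B * (A : ℝ) ^ M) ^ 2) / ((A : ℝ) ^ (M + 1) / 2) ^ 2 := by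
      apply div_le_div₀ (by positivity) hS (by positivity)
      have := pow_le_pow_left₀ (by positivity) hRlow 2
      nlinarith [hRlow, hAM1]
    have hcalc : ((d : ℝ) * (((k : ℝ) + 1) * B * (A : ℝ) ^ M) ^ 2) / ((A : ℝ) ^ (M + 1) / 2) ^ 2
        = 4 * (d : ℝ) * (((k : ℝ) + 1) * B) ^ 2 / (A : ℝ) ^ 2 := by
      rw [pow_succ]
      field_simp
      ring
    have hfin : 4 * (d : ℝ) * (((k : ℝ) + 1) * B) ^ 2 / (A : ℝ) ^ 2
        ≤ 4 * (d : ℝ) * (((k : ℝ) + 1) * B) ^ 2 / (A : ℝ) := by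
      gcongr
      nlinarith
    calc -(|ξ j| - R) / R ≤ (R ^ 2 - ξ j ^ 2) / R ^ 2 := hkey
      _ ≤ ((d : ℝ) * (((k : ℝ) + 1) * B * (A : ℝ) ^ M) ^ 2) / ((A : ℝ) ^ (M + 1) / 2) ^ 2 := hkey2
      _ = 4 * (d : ℝ) * (((k : ℝ) + 1) * B) ^ 2 / (A : ℝ) ^ 2 := hcalc
      _ ≤ 4 * (d : ℝ) * (((k : ℝ) + 1) * B) ^ 2 / (A : ℝ) := hfin
  · rw [if_neg hj, sub_zero]
    have heq : -Complex.I * ((ξ j : ℝ) : ℂ) / (R : ℂ)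
        = -Complex.I * ((ξ j / R : ℝ) : ℂ) := by
      push_cast
      ring
    rw [heq, norm_mul, norm_neg, Complex.norm_I, one_mul, Complex.norm_real, Real.norm_eq_abs,
      abs_div, abs_of_pos hRpos]
    have h1 : |ξ j| / R ≤ (((k : ℝ) + 1) * B * (A : ℝ) ^ M) / ((A : ℝ) ^ (M + 1) / 2) :=
      div_le_div₀ (by positivity) (key2 j hj) (by positivity) hRlow
    have h2 : (((k : ℝ) + 1) * B * (A : ℝ) ^ M) / ((A : ℝ) ^ (M + 1) / 2)
        = 2 * ((k : ℝ) + 1) * B / (A : ℝ) := by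
      rw [pow_succ]
      field_simp
    have h3 : 2 * ((k : ℝ) + 1) * B / (A : ℝ)
        ≤ 4 * (d : ℝ) * (((k : ℝ) + 1) * B) ^ 2 / (A : ℝ) := by
      gcongr ?_ / _
      have hx1 : (1 : ℝ) ≤ ((k : ℝ) + 1) * B := by nlinarith [Nat.cast_nonneg (α := ℝ) k]
      nlinarith [sq_nonneg (((k : ℝ) + 1) * B)]
    calc |ξ j| / R ≤ (((k : ℝ) + 1) * B * (A : ℝ) ^ M) / ((A : ℝ) ^ (M + 1) / 2) := h1
      _ = 2 * ((k : ℝ) + 1) * B / (A : ℝ) := h2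
      _ ≤ 4 * (d : ℝ) * (((k : ℝ) + 1) * B) ^ 2 / (A : ℝ) := h3
end

section
/- The dyadic shift and the dyadic Riesz vector are involutions up to projection: for every finite Haar expansion $f$ on $I_0$, $\mathcal S_0^2 f = \sum_{j=1}^d \mathcal S_j^2 f = -\big(f - \langle f, h^1_{I_0}\rangle h^1_{I_0} - \langle f, h_{I_0}\rangle h_{I_0}\big)$. -/
open MeasureTheory

/-- The `L²`-normalized Haar function of the dyadic interval `[i/2^n, (i+1)/2^n)`:
value `2^(n/2)` on the right half, `-2^(n/2)` on the left half. -/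
noncomputable def haar (n i : ℕ) (x : ℝ) : ℝ :=
  if (2 * i + 1 : ℝ) / 2 ^ (n + 1) ≤ x ∧ x < (2 * i + 2 : ℝ) / 2 ^ (n + 1) then
    (2 : ℝ) ^ ((n : ℝ) / 2)
  else if (2 * i : ℝ) / 2 ^ (n + 1) ≤ x ∧ x < (2 * i + 1 : ℝ) / 2 ^ (n + 1) then
    -((2 : ℝ) ^ ((n : ℝ) / 2))
  else 0

/-- The constant Haar function `h¹_{I₀} = χ_{[0,1)}`. -/
noncomputable def haarOne (x : ℝ) : ℝ := if 0 ≤ x ∧ x < 1 then 1 else 0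

/-- The index of the sibling dyadic interval (same parent). -/
def partner (i : ℕ) : ℕ := if i % 2 = 1 then i - 1 else i + 1

/-- The sign with which the operator `𝒮_j` (for `j = 0`: the dyadic shift `𝒮₀`;
for `1 ≤ j ≤ d`: the `j`-th dyadic Riesz transform, acting on Haar functions whose
level is `≡ j - 1 (mod d)`) maps `h_{n,i}` to `h_{n, partner i}`.
`𝒮_j h_{Î₊} = h_{Î₋}` (sign `+1` for `i` odd), `𝒮_j h_{Î₋} = -h_{Î₊}` (sign `-1`),
and all Haar functions at level `0` (namely `h_{I₀}`) are annihilated. -/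
noncomputable def Ssign (d j n i : ℕ) : ℝ :=
  if (j = 0 ∨ n % d = j - 1) ∧ n ≠ 0 then (if i % 2 = 1 then 1 else -1) else 0

/-- A finite Haar expansion `f = a h¹_{I₀} + ∑ c_{n,i} h_{n,i}`. -/
noncomputable def haarExp (a : ℝ) (c : ℕ × ℕ →₀ ℝ) : ℝ → ℝ := fun x =>
  a * haarOne x + ∑ q ∈ c.support, c q * haar q.1 q.2 x

/-- `𝒮_j` applied to the finite Haar expansion with coefficients `(a, c)`
(the constant part is annihilated). -/
noncomputable def Sexp (d j : ℕ) (c : ℕ × ℕ →₀ ℝ) : ℝ → ℝ := fun x =>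
  ∑ q ∈ c.support, c q * (Ssign d j q.1 q.2 * haar q.1 (partner q.2) x)

/-- `𝒮_j (𝒮_{j'} f)` for a finite Haar expansion `f` with coefficients `(a, c)`,
computed on the Haar coefficient level (note `partner (partner i) = i`). -/
noncomputable def SSexp (d j j' : ℕ) (c : ℕ × ℕ →₀ ℝ) : ℝ → ℝ := fun x =>
  ∑ q ∈ c.support,
    c q * (Ssign d j' q.1 q.2 * Ssign d j q.1 (partner q.2) * haar q.1 q.2 x)


lemma bnds (n i : ℕ) (hi : i < 2 ^ n) :
    (0:ℝ) ≤ (2 * i : ℝ) / 2 ^ (n + 1) ∧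
    (2 * i : ℝ) / 2 ^ (n + 1) ≤ (2 * i + 1 : ℝ) / 2 ^ (n + 1) ∧
    (2 * i + 1 : ℝ) / 2 ^ (n + 1) ≤ (2 * i + 2 : ℝ) / 2 ^ (n + 1) ∧
    (2 * i + 2 : ℝ) / 2 ^ (n + 1) ≤ 1 := by
  have hp : (0:ℝ) < 2 ^ (n + 1) := by positivity
  have hc : (2 * i + 2 : ℝ) ≤ 2 ^ (n + 1) := by
    have : (i : ℝ) + 1 ≤ 2 ^ n := by exact_mod_cast hi
    have h2 : (2:ℝ) ^ (n+1) = 2 * 2 ^ n := by ring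
    nlinarith
  refine ⟨by positivity, ?_, ?_, ?_⟩
  · gcongr; linarith
  · gcongr; linarith
  · rw [div_le_one hp]; exact hc

lemma haar_eq (n i : ℕ) (x : ℝ) :
    haar n i x = (2:ℝ) ^ ((n:ℝ)/2) *
      ((Set.Ico ((2*i+1:ℝ)/2^(n+1)) ((2*i+2:ℝ)/2^(n+1))).indicator (fun _ => (1:ℝ)) x
       - (Set.Ico ((2*i:ℝ)/2^(n+1)) ((2*i+1:ℝ)/2^(n+1))).indicator (fun _ => (1:ℝ)) x) := by
  unfold haar
  simp only [Set.indicator, Set.mem_Ico]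
  split_ifs with h1 h2 h3
  · exact absurd h2.2 (not_lt.2 h1.1)
  · ring
  · ring
  · ring

lemma haarOne_eq : haarOne = (Set.Ico (0:ℝ) 1).indicator (fun _ => (1:ℝ)) := by
  funext x
  simp only [haarOne, Set.indicator, Set.mem_Ico]

lemma ind_intOn (a b : ℝ) :
    IntegrableOn ((Set.Ico a b).indicator (fun _ => (1:ℝ))) (Set.Ico (0:ℝ) 1) := by
  apply Integrable.integrableOn
  rw [integrable_indicator_iff measurableSet_Ico]
  exact integrableOn_const (by rw [Real.volume_Ico]; exact ENNReal.ofReal_ne_top)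

lemma haar_intOn (n i : ℕ) : IntegrableOn (haar n i) (Set.Ico (0:ℝ) 1) := by
  have h : haar n i = fun x => (2:ℝ) ^ ((n:ℝ)/2) *
      ((Set.Ico ((2*i+1:ℝ)/2^(n+1)) ((2*i+2:ℝ)/2^(n+1))).indicator (fun _ => (1:ℝ)) x
       - (Set.Ico ((2*i:ℝ)/2^(n+1)) ((2*i+1:ℝ)/2^(n+1))).indicator (fun _ => (1:ℝ)) x) :=
    funext (haar_eq n i)
  rw [h]
  exact (((ind_intOn _ _).sub (ind_intOn _ _)).const_mul _)

lemma haarOne_intOn : IntegrableOn haarOne (Set.Ico (0:ℝ) 1) := by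
  rw [haarOne_eq]; exact ind_intOn 0 1

lemma int_ind (a b : ℝ) (hab : a ≤ b) (h : Set.Ico a b ⊆ Set.Ico (0:ℝ) 1) :
    ∫ t in Set.Ico (0:ℝ) 1, (Set.Ico a b).indicator (fun _ => (1:ℝ)) t = b - a := by
  rw [setIntegral_indicator measurableSet_Ico, Set.inter_eq_right.mpr h, setIntegral_const,
    Real.volume_real_Ico_of_le hab]
  simp

lemma int_haarOne : ∫ t in Set.Ico (0:ℝ) 1, haarOne t = 1 := by
  rw [haarOne_eq, int_ind 0 1 (by norm_num) subset_rfl]; norm_num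

lemma int_haar (n i : ℕ) (hi : i < 2 ^ n) : ∫ t in Set.Ico (0:ℝ) 1, haar n i t = 0 := by
  obtain ⟨b0, b1, b2, b3⟩ := bnds n i hi
  have h : ∀ t, haar n i t = (2:ℝ) ^ ((n:ℝ)/2) *
      ((Set.Ico ((2*i+1:ℝ)/2^(n+1)) ((2*i+2:ℝ)/2^(n+1))).indicator (fun _ => (1:ℝ)) t
       - (Set.Ico ((2*i:ℝ)/2^(n+1)) ((2*i+1:ℝ)/2^(n+1))).indicator (fun _ => (1:ℝ)) t) :=
    haar_eq n i
  simp only [h]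
  rw [integral_const_mul, integral_sub (ind_intOn _ _) (ind_intOn _ _),
    int_ind _ _ b2 (Set.Ico_subset_Ico (by linarith) b3),
    int_ind _ _ b1 (Set.Ico_subset_Ico b0 (by linarith))]
  ring

lemma haar_zero (n i : ℕ) (hi : i < 2 ^ n) (x : ℝ) (hx : ¬ (0 ≤ x ∧ x < 1)) :
    haar n i x = 0 := by
  obtain ⟨b0, b1, b2, b3⟩ := bnds n i hi
  unfold haar
  rw [if_neg, if_neg]
  · rintro ⟨h1, h2⟩; exact hx ⟨by linarith, by linarith⟩
  · rintro ⟨h1, h2⟩; exact hx ⟨by linarith, by linarith⟩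

lemma haar_mul_haarOne (n i : ℕ) (hi : i < 2 ^ n) (x : ℝ) :
    haar n i x * haarOne x = haar n i x := by
  by_cases hx : 0 ≤ x ∧ x < 1
  · simp [haarOne, hx]
  · simp [haarOne, hx, haar_zero n i hi x hx]

lemma haarOne_sq (x : ℝ) : haarOne x * haarOne x = haarOne x := by
  unfold haarOne; split_ifs <;> norm_num

lemma haar00 (x : ℝ) : haar 0 0 x = if 1/2 ≤ x ∧ x < 1 then 1
    else if 0 ≤ x ∧ x < 1/2 then -1 else 0 := by
  unfold haar
  norm_num

lemma haar00_sq (x : ℝ) : haar 0 0 x * haar 0 0 x = haarOne x := by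
  rw [haar00]; unfold haarOne
  split_ifs with h1 h2 h3 h4 h5 <;> norm_num <;> exfalso
  · exact h2 ⟨by linarith [h1.1], h1.2⟩
  · exact h4 ⟨h3.1, by linarith [h3.2]⟩
  · push_neg at h1 h3
    linarith [h3 h5.1, h1 (h3 h5.1)]

noncomputable def eps (n i : ℕ) : ℝ := if 2 ^ n ≤ 2 * i then 1 else -1

lemma haar_mul_haar00 (n i : ℕ) (hn : n ≠ 0) (hi : i < 2 ^ n) (x : ℝ) :
    haar n i x * haar 0 0 x = eps n i * haar n i x := by
  obtain ⟨b0, b1, b2, b3⟩ := bnds n i hi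
  by_cases hs : (2 * i : ℝ) / 2 ^ (n + 1) ≤ x ∧ x < (2 * i + 2 : ℝ) / 2 ^ (n + 1)
  · have hp : (0:ℝ) < 2 ^ (n + 1) := by positivity
    have h2n : (2:ℝ) ^ (n+1) = 2 * 2 ^ n := by ring
    by_cases hc : 2 ^ n ≤ 2 * i
    · have hcr : (2:ℝ) ^ n ≤ 2 * i := by exact_mod_cast hc
      have hl : (1:ℝ)/2 ≤ (2 * i : ℝ) / 2 ^ (n + 1) := by
        rw [le_div_iff₀ hp, h2n]; linarith
      have h00 : haar 0 0 x = 1 := by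
        rw [haar00, if_pos ⟨by linarith [hs.1], by linarith [hs.2]⟩]
      have he : eps n i = 1 := by simp [eps, hc]
      rw [h00, he]; ring
    · have hme : 2 ^ n = 2 * 2 ^ (n - 1) := by
        rw [← pow_succ']; congr 1; omega
      have hc2 : 2 * i + 2 ≤ 2 ^ n := by omega
      have hcr : (2 * i : ℝ) + 2 ≤ 2 ^ n := by exact_mod_cast hc2
      have hr : (2 * i + 2 : ℝ) / 2 ^ (n + 1) ≤ 1/2 := by
        rw [div_le_div_iff₀ hp (by norm_num : (0:ℝ) < 2), h2n]; linarith
      have h00 : haar 0 0 x = -1 := by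
        rw [haar00, if_neg, if_pos ⟨by linarith [hs.1], by linarith [hs.2]⟩]
        rintro ⟨ha, _⟩; linarith [hs.2]
      have he : eps n i = -1 := by simp [eps, hc]
      rw [h00, he]; ring
  · have hz : haar n i x = 0 := by
      unfold haar
      rw [if_neg, if_neg]
      · rintro ⟨h1, h2⟩; exact hs ⟨by linarith, by linarith⟩
      · rintro ⟨h1, h2⟩; exact hs ⟨by linarith, by linarith⟩
    rw [hz]; ring

lemma sgn_mul (i : ℕ) :
    (if i % 2 = 1 then (1:ℝ) else -1) * (if (partner i) % 2 = 1 then (1:ℝ) else -1) = -1 := by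
  by_cases h : i % 2 = 1
  · have h' : ¬ (i - 1) % 2 = 1 := by omega
    simp [partner, h, h']
  · have h' : (i + 1) % 2 = 1 := by omega
    simp [partner, h, h']

lemma Ssign0_mul (d n i : ℕ) :
    Ssign d 0 n i * Ssign d 0 n (partner i) = if n = 0 then 0 else -1 := by
  unfold Ssign
  by_cases hn : n = 0
  · simp [hn]
  · rw [if_neg hn]
    have hcnd : (0 = 0 ∨ n % d = 0 - 1) ∧ n ≠ 0 := ⟨Or.inl rfl, hn⟩
    rw [if_pos hcnd, if_pos hcnd, sgn_mul]

lemma sum_Ssign (d : ℕ) (hd : 1 ≤ d) (n i : ℕ) :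
    ∑ j ∈ Finset.Icc 1 d, Ssign d j n i * Ssign d j n (partner i) =
      if n = 0 then 0 else -1 := by
  by_cases hn : n = 0
  · simp [hn, Ssign]
  · rw [if_neg hn]
    have hmem : n % d + 1 ∈ Finset.Icc 1 d := by
      rw [Finset.mem_Icc]
      have := Nat.mod_lt n (by omega : 0 < d)
      omega
    have hstep : ∀ j ∈ Finset.Icc 1 d,
        Ssign d j n i * Ssign d j n (partner i) =
          if j = n % d + 1 then (-1:ℝ) else 0 := by
      intro j hj
      rw [Finset.mem_Icc] at hj
      unfold Ssign
      by_cases hc : j = n % d + 1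
      · have : (j = 0 ∨ n % d = j - 1) ∧ n ≠ 0 := ⟨Or.inr (by omega), hn⟩
        rw [if_pos this, if_pos this, if_pos hc, sgn_mul]
      · have hne : ¬ ((j = 0 ∨ n % d = j - 1) ∧ n ≠ 0) := by
          rintro ⟨h1 | h1, _⟩ <;> omega
        rw [if_neg hne, if_neg hne, if_neg hc, zero_mul]
    rw [Finset.sum_congr rfl hstep, Finset.sum_ite_eq' (Finset.Icc 1 d) (n % d + 1)
      (fun _ => (-1:ℝ)), if_pos hmem]

lemma intExp_one (a : ℝ) (c : ℕ × ℕ →₀ ℝ) (hvalid : ∀ q ∈ c.support, q.2 < 2 ^ q.1) :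
    ∫ t in Set.Ico (0:ℝ) 1, haarExp a c t * haarOne t = a := by
  have hpt : ∀ t, haarExp a c t * haarOne t =
      a * haarOne t + ∑ q ∈ c.support, c q * haar q.1 q.2 t := by
    intro t
    unfold haarExp
    rw [add_mul, Finset.sum_mul]
    congr 1
    · rw [mul_assoc, haarOne_sq]
    · exact Finset.sum_congr rfl fun q hq => by
        rw [mul_assoc, haar_mul_haarOne q.1 q.2 (hvalid q hq)]
  simp only [hpt]
  have h1 : Integrable (fun t => a * haarOne t) (volume.restrict (Set.Ico (0:ℝ) 1)) :=
    haarOne_intOn.const_mul a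
  have h2 : ∀ q ∈ c.support, Integrable (fun t => c q * haar q.1 q.2 t)
      (volume.restrict (Set.Ico (0:ℝ) 1)) := fun q _ => (haar_intOn q.1 q.2).const_mul _
  rw [integral_add h1 (integrable_finset_sum _ h2), integral_finset_sum _ h2,
    integral_const_mul, int_haarOne, mul_one]
  rw [Finset.sum_eq_zero, add_zero]
  intro q hq
  rw [integral_const_mul, int_haar q.1 q.2 (hvalid q hq), mul_zero]

lemma intExp_h00 (a : ℝ) (c : ℕ × ℕ →₀ ℝ) (hvalid : ∀ q ∈ c.support, q.2 < 2 ^ q.1) :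
    ∫ t in Set.Ico (0:ℝ) 1, haarExp a c t * haar 0 0 t = c (0, 0) := by
  set g : ℕ × ℕ → ℝ → ℝ := fun q t =>
    if q.1 = 0 then haarOne t else eps q.1 q.2 * haar q.1 q.2 t with hg
  have hpt : ∀ t, haarExp a c t * haar 0 0 t =
      a * haar 0 0 t + ∑ q ∈ c.support, c q * g q t := by
    intro t
    unfold haarExp
    rw [add_mul, Finset.sum_mul]
    congr 1
    · rw [mul_assoc, mul_comm (haarOne t), haar_mul_haarOne 0 0 (by norm_num) t]
    · refine Finset.sum_congr rfl fun q hq => ?_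
      by_cases h0 : q.1 = 0
      · have h2 : q.2 = 0 := by
          have := hvalid q hq; rw [h0, pow_zero] at this; omega
        have hgq : g q t = haarOne t := by simp only [hg]; rw [if_pos h0]
        rw [mul_assoc, hgq, h0, h2, haar00_sq]
      · have hgq : g q t = eps q.1 q.2 * haar q.1 q.2 t := by
          simp only [hg]; rw [if_neg h0]
        rw [mul_assoc, hgq, haar_mul_haar00 q.1 q.2 h0 (hvalid q hq)]
  simp only [hpt]
  have hgint : ∀ q ∈ c.support, Integrable (fun t => c q * g q t)
      (volume.restrict (Set.Ico (0:ℝ) 1)) := by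
    intro q _
    by_cases h0 : q.1 = 0
    · simp only [hg, if_pos h0]; exact haarOne_intOn.const_mul _
    · simp only [hg, if_neg h0]
      exact ((haar_intOn q.1 q.2).const_mul _).const_mul _
  rw [integral_add ((haar_intOn 0 0).const_mul a) (integrable_finset_sum _ hgint),
    integral_finset_sum _ hgint, integral_const_mul, int_haar 0 0 (by norm_num), mul_zero,
    zero_add]
  have hterm : ∀ q ∈ c.support, ∫ t in Set.Ico (0:ℝ) 1, c q * g q t =
      if q = (0, 0) then c q else 0 := by
    intro q hq
    by_cases h0 : q.1 = 0
    · have h2 : q.2 = 0 := by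
        have := hvalid q hq; rw [h0, pow_zero] at this; omega
      have hq00 : q = (0, 0) := Prod.ext h0 h2
      have hgq : ∀ t, g q t = haarOne t := fun t => by simp only [hg]; rw [if_pos h0]
      simp only [hgq, if_pos hq00]
      rw [integral_const_mul, int_haarOne, mul_one]
    · have hq00 : q ≠ (0, 0) := fun h => h0 (by rw [h])
      have hgq : ∀ t, g q t = eps q.1 q.2 * haar q.1 q.2 t := fun t => by
        simp only [hg]; rw [if_neg h0]
      simp only [hgq, if_neg hq00]
      rw [integral_const_mul, integral_const_mul, int_haar q.1 q.2 (hvalid q hq),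
        mul_zero, mul_zero]
  rw [Finset.sum_congr rfl hterm, Finset.sum_ite_eq' c.support ((0:ℕ), (0:ℕ)) (fun q => c q)]
  by_cases hmem : ((0:ℕ), (0:ℕ)) ∈ c.support
  · rw [if_pos hmem]
  · rw [if_neg hmem, Finsupp.notMem_support_iff.mp hmem]

lemma sum_shift (c : ℕ × ℕ →₀ ℝ) (hvalid : ∀ q ∈ c.support, q.2 < 2 ^ q.1)
    (S : ℕ × ℕ → ℝ) (hS : ∀ q ∈ c.support, S q = if q.1 = 0 then (0:ℝ) else -1) (x : ℝ) :
    ∑ q ∈ c.support, c q * (S q * haar q.1 q.2 x) =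
      -(∑ q ∈ c.support, c q * haar q.1 q.2 x - c (0, 0) * haar 0 0 x) := by
  have hterm : ∀ q ∈ c.support, c q * (S q * haar q.1 q.2 x) =
      -(c q * haar q.1 q.2 x) + (if q = (0, 0) then c q * haar q.1 q.2 x else 0) := by
    intro q hq
    by_cases h0 : q.1 = 0
    · have h2 : q.2 = 0 := by
        have := hvalid q hq; rw [h0, pow_zero] at this; omega
      have hq00 : q = (0, 0) := Prod.ext h0 h2
      rw [hS q hq, if_pos h0, if_pos hq00]; ring
    · have hq00 : q ≠ (0, 0) := fun h => h0 (by rw [h])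
      rw [hS q hq, if_neg h0, if_neg hq00]; ring
  rw [Finset.sum_congr rfl hterm, Finset.sum_add_distrib,
    Finset.sum_ite_eq' c.support ((0:ℕ), (0:ℕ)) (fun q => c q * haar q.1 q.2 x),
    Finset.sum_neg_distrib]
  by_cases hmem : ((0:ℕ), (0:ℕ)) ∈ c.support
  · rw [if_pos hmem]; ring
  · rw [if_neg hmem, Finsupp.notMem_support_iff.mp hmem]; ring

/-- the dyadic shift and the dyadic Riesz vector are involutions up to
projection: `𝒮₀² f = ∑_{j=1}^d 𝒮_j² f = -(f - ⟨f, h¹_{I₀}⟩ h¹_{I₀} - ⟨f, h_{I₀}⟩ h_{I₀})`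
for every finite Haar expansion `f`. -/
theorem dyadic_riesz_involution (d : ℕ) (hd : 1 ≤ d) (a : ℝ) (c : ℕ × ℕ →₀ ℝ)
    (hvalid : ∀ q ∈ c.support, q.2 < 2 ^ q.1) :
    (∀ x : ℝ, SSexp d 0 0 c x =
      -(haarExp a c x
        - (∫ t in Set.Ico (0 : ℝ) 1, haarExp a c t * haarOne t) * haarOne x
        - (∫ t in Set.Ico (0 : ℝ) 1, haarExp a c t * haar 0 0 t) * haar 0 0 x)) ∧
    (∀ x : ℝ, ∑ j ∈ Finset.Icc 1 d, SSexp d j j c x =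
      -(haarExp a c x
        - (∫ t in Set.Ico (0 : ℝ) 1, haarExp a c t * haarOne t) * haarOne x
        - (∫ t in Set.Ico (0 : ℝ) 1, haarExp a c t * haar 0 0 t) * haar 0 0 x)) := by
  rw [intExp_one a c hvalid, intExp_h00 a c hvalid]
  constructor
  · intro x
    calc SSexp d 0 0 c x
        = -(∑ q ∈ c.support, c q * haar q.1 q.2 x - c (0, 0) * haar 0 0 x) :=
          sum_shift c hvalid
            (fun q => Ssign d 0 q.1 q.2 * Ssign d 0 q.1 (partner q.2))
            (fun q _ => Ssign0_mul d q.1 q.2) x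
      _ = -(haarExp a c x - a * haarOne x - c (0, 0) * haar 0 0 x) := by
          unfold haarExp; ring
  · intro x
    have hswap : ∑ j ∈ Finset.Icc 1 d, SSexp d j j c x =
        ∑ q ∈ c.support, c q *
          ((∑ j ∈ Finset.Icc 1 d, Ssign d j q.1 q.2 * Ssign d j q.1 (partner q.2)) *
            haar q.1 q.2 x) := by
      unfold SSexp
      rw [Finset.sum_comm]
      refine Finset.sum_congr rfl fun q _ => ?_
      rw [Finset.sum_mul, Finset.mul_sum]
    rw [hswap]
    calc ∑ q ∈ c.support, c q *
          ((∑ j ∈ Finset.Icc 1 d, Ssign d j q.1 q.2 * Ssign d j q.1 (partner q.2)) *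
            haar q.1 q.2 x)
        = -(∑ q ∈ c.support, c q * haar q.1 q.2 x - c (0, 0) * haar 0 0 x) :=
          sum_shift c hvalid _ (fun q _ => sum_Ssign d hd q.1 q.2) x
      _ = -(haarExp a c x - a * haarOne x - c (0, 0) * haar 0 0 x) := by
          unfold haarExp; ring
end

section
/- For every real-valued finite Haar expansion $f$ on $I_0$, $\sum_{j=1}^d \|\mathcal S_j f\|_{L^2(I_0)}^2 = \|\mathcal S_0 f\|_{L^2(I_0)}^2 = \|f\|_{L^2(I_0)}^2 - \langle f, h^1_{I_0}\rangle^2 - \langle f, h_{I_0}\rangle^2$. -/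
open MeasureTheory

namespace HaarAux

lemma cross {N a b x : ℝ} (hN : 0 < N) (h1 : a/N ≤ x) (h2 : x < b/N) : a < b :=
  lt_of_le_of_lt ((div_le_iff₀ hN).mp h1) ((lt_div_iff₀ hN).mp h2)

lemma div_mono {N a b : ℝ} (hN : 0 < N) (h : a ≤ b) : a / N ≤ b / N := by gcongr

structure Nice (f : ℝ → ℝ) : Prop where
  meas : Measurable f
  bdd : ∃ C, ∀ x, |f x| ≤ C

lemma Nice.integrableOn {f : ℝ → ℝ} (hf : Nice f) :
    IntegrableOn f (Set.Ico (0:ℝ) 1) := by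
  obtain ⟨C, hC⟩ := hf.bdd
  haveI : IsFiniteMeasure (volume.restrict (Set.Ico (0:ℝ) 1)) :=
    ⟨by rw [Measure.restrict_apply_univ]; simp [Real.volume_Ico]⟩
  exact ⟨hf.meas.aestronglyMeasurable,
    HasFiniteIntegral.of_bounded (C := C) (ae_of_all _ (by simpa [Real.norm_eq_abs] using hC))⟩

lemma Nice.mul {f g : ℝ → ℝ} (hf : Nice f) (hg : Nice g) : Nice (fun x => f x * g x) := by
  obtain ⟨C, hC⟩ := hf.bdd
  obtain ⟨D, hD⟩ := hg.bdd
  exact ⟨hf.meas.mul hg.meas, ⟨C * D, fun x => by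
    rw [abs_mul]
    exact mul_le_mul (hC x) (hD x) (abs_nonneg _) ((abs_nonneg _).trans (hC x))⟩⟩

lemma Nice.const_mul {f : ℝ → ℝ} (r : ℝ) (hf : Nice f) : Nice (fun x => r * f x) := by
  obtain ⟨C, hC⟩ := hf.bdd
  exact ⟨measurable_const.mul hf.meas, ⟨|r| * C, fun x => by
    rw [abs_mul]; exact mul_le_mul_of_nonneg_left (hC x) (abs_nonneg _)⟩⟩

lemma Nice.add {f g : ℝ → ℝ} (hf : Nice f) (hg : Nice g) : Nice (fun x => f x + g x) := by
  obtain ⟨C, hC⟩ := hf.bdd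
  obtain ⟨D, hD⟩ := hg.bdd
  exact ⟨hf.meas.add hg.meas, ⟨C + D, fun x =>
    (abs_add_le _ _).trans (add_le_add (hC x) (hD x))⟩⟩

lemma Nice.finsetSum {ι : Type*} (s : Finset ι) (F : ι → ℝ → ℝ)
    (h : ∀ q ∈ s, Nice (F q)) : Nice (fun x => ∑ q ∈ s, F q x) := by
  classical
  induction s using Finset.induction with
  | empty => exact ⟨by simpa using measurable_const, ⟨0, by simp⟩⟩
  | @insert q s' hq ih =>
    simp only [Finset.sum_insert hq]
    exact (h q (Finset.mem_insert_self _ _)).add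
      (ih fun r hr => h r (Finset.mem_insert_of_mem hr))

lemma haar_indicator (n i : ℕ) : haar n i = fun x =>
    (Set.Ico ((2*i+1:ℝ)/2^(n+1)) ((2*i+2:ℝ)/2^(n+1))).indicator
      (fun _ => (2:ℝ)^((n:ℝ)/2)) x -
    (Set.Ico ((2*i:ℝ)/2^(n+1)) ((2*i+1:ℝ)/2^(n+1))).indicator
      (fun _ => (2:ℝ)^((n:ℝ)/2)) x := by
  funext x
  unfold haar
  simp only [Set.indicator, Set.mem_Ico]
  split_ifs with h1 h2 h3 h4 h5 <;> try ring
  exact absurd h2.2 (not_lt.mpr h1.1)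

lemma haar_nice (n i : ℕ) : Nice (haar n i) := by
  rw [haar_indicator]
  refine ⟨((measurable_const.indicator measurableSet_Ico).sub
    (measurable_const.indicator measurableSet_Ico)), ⟨2 * (2:ℝ)^((n:ℝ)/2), fun x => ?_⟩⟩
  have h2 : (0:ℝ) ≤ (2:ℝ)^((n:ℝ)/2) := by positivity
  simp only [Set.indicator]
  split_ifs <;>
    simp only [sub_self, sub_zero, zero_sub, abs_zero, abs_neg, abs_of_nonneg h2] <;>
    linarith

lemma haarOne_nice : Nice haarOne := by
  have : haarOne = (Set.Ico (0:ℝ) 1).indicator (fun _ => (1:ℝ)) := by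
    funext x; unfold haarOne; simp [Set.indicator, Set.mem_Ico]
  rw [this]
  refine ⟨measurable_const.indicator measurableSet_Ico, ⟨1, fun x => ?_⟩⟩
  simp only [Set.indicator]; split_ifs <;> simp

lemma setIntegral_indicator_Ico (a b C : ℝ) (h0 : 0 ≤ a) (hab : a ≤ b) (h1 : b ≤ 1) :
    ∫ x in Set.Ico (0:ℝ) 1, (Set.Ico a b).indicator (fun _ => C) x = (b - a) * C := by
  rw [setIntegral_indicator measurableSet_Ico, Set.Ico_inter_Ico,
    max_eq_right h0, min_eq_right h1, setIntegral_const, measureReal_def, Real.volume_Ico,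
    ENNReal.toReal_ofReal (by linarith), smul_eq_mul]

end HaarAux

namespace HaarAux

lemma nice_indicator (a b C : ℝ) : Nice ((Set.Ico a b).indicator (fun _ => C)) := by
  refine ⟨measurable_const.indicator measurableSet_Ico, ⟨|C|, fun x => ?_⟩⟩
  simp only [Set.indicator]; split_ifs <;> simp

lemma bounds (n i : ℕ) (hi : i < 2^n) :
    (0:ℝ) ≤ (2*i:ℝ)/2^(n+1) ∧ ((2*i+2:ℝ)/2^(n+1)) ≤ 1 := by
  constructor
  · positivity
  · rw [div_le_one (by positivity)]
    have : (i:ℝ) + 1 ≤ 2^n := by exact_mod_cast hi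
    have h2 : ((2:ℝ))^(n+1) = 2 * 2^n := by ring
    rw [h2]; linarith

lemma integral_haar (n i : ℕ) (hi : i < 2^n) :
    ∫ x in Set.Ico (0:ℝ) 1, haar n i x = 0 := by
  have hb := bounds n i hi
  have hN : (0:ℝ) < 2^(n+1) := by positivity
  have e1 : (2*i:ℝ)/2^(n+1) ≤ (2*i+1:ℝ)/2^(n+1) := div_mono hN (by linarith)
  have e2 : (2*i+1:ℝ)/2^(n+1) ≤ (2*i+2:ℝ)/2^(n+1) := div_mono hN (by linarith)
  simp only [haar_indicator]
  rw [integral_sub (nice_indicator _ _ _).integrableOn (nice_indicator _ _ _).integrableOn,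
    setIntegral_indicator_Ico _ _ _ (le_trans hb.1 e1) e2 hb.2,
    setIntegral_indicator_Ico _ _ _ hb.1 e1 (le_trans e2 hb.2)]
  ring

lemma rpow_sq (n : ℕ) : ((2:ℝ)^((n:ℝ)/2))^2 = 2^n := by
  rw [← Real.rpow_natCast ((2:ℝ)^((n:ℝ)/2)) 2, ← Real.rpow_mul (by norm_num)]
  push_cast
  rw [div_mul_cancel₀ _ (by norm_num : (2:ℝ) ≠ 0), Real.rpow_natCast]

lemma haar_sq (n i : ℕ) (x : ℝ) :
    haar n i x ^ 2 =
      (Set.Ico ((2*i:ℝ)/2^(n+1)) ((2*i+2:ℝ)/2^(n+1))).indicator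
        (fun _ => ((2:ℝ)^((n:ℝ)/2))^2) x := by
  have hN : (0:ℝ) < 2^(n+1) := by positivity
  have e1 : (2*i:ℝ)/2^(n+1) ≤ (2*i+1:ℝ)/2^(n+1) := div_mono hN (by linarith)
  have e2 : (2*i+1:ℝ)/2^(n+1) ≤ (2*i+2:ℝ)/2^(n+1) := div_mono hN (by linarith)
  unfold haar
  simp only [Set.indicator, Set.mem_Ico]
  split_ifs with h1 h2 h3 h4 h5 <;> try ring
  · exact absurd ⟨le_trans e1 h1.1, h1.2⟩ h2
  · exact absurd ⟨h3.1, lt_of_lt_of_le h3.2 e2⟩ h4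
  · rcases le_or_gt ((2*i+1:ℝ)/2^(n+1)) x with h | h
    · exact absurd ⟨h, h5.2⟩ h1
    · exact absurd ⟨h5.1, h⟩ h3

lemma integral_haar_sq (n i : ℕ) (hi : i < 2^n) :
    ∫ x in Set.Ico (0:ℝ) 1, haar n i x ^ 2 = 1 := by
  have hb := bounds n i hi
  have hN : (0:ℝ) < 2^(n+1) := by positivity
  have e : (2*i:ℝ)/2^(n+1) ≤ (2*i+2:ℝ)/2^(n+1) := div_mono hN (by linarith)
  simp only [haar_sq]
  rw [setIntegral_indicator_Ico _ _ _ hb.1 e hb.2, rpow_sq]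
  have : (2*i+2:ℝ)/2^(n+1) - (2*i:ℝ)/2^(n+1) = 2/2^(n+1) := by ring
  rw [this]
  have h2 : ((2:ℝ))^(n+1) = 2 * 2^n := by ring
  rw [h2]
  field_simp

end HaarAux

namespace HaarAux

lemma haar_mul_same (n i k : ℕ) (hik : i ≠ k) (x : ℝ) :
    haar n i x * haar n k x = 0 := by
  have hN : (0:ℝ) < 2^(n+1) := by positivity
  unfold haar
  split_ifs with h1 h2 h3 h4 h5 h6 <;> try ring
  all_goals exfalso
  · have a1 := cross hN h1.1 h2.2
    have a2 := cross hN h2.1 h1.2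
    have b1 : 2*i+1 < 2*k+2 := by exact_mod_cast a1
    have b2 : 2*k+1 < 2*i+2 := by exact_mod_cast a2
    omega
  · have a1 := cross hN h1.1 h3.2
    have a2 := cross hN h3.1 h1.2
    have b1 : 2*i+1 < 2*k+1 := by exact_mod_cast a1
    have b2 : 2*k < 2*i+2 := by exact_mod_cast a2
    omega
  · have a1 := cross hN h4.1 h5.2
    have a2 := cross hN h5.1 h4.2
    have b1 : 2*i < 2*k+2 := by exact_mod_cast a1
    have b2 : 2*k+1 < 2*i+1 := by exact_mod_cast a2
    omega
  · have a1 := cross hN h4.1 h6.2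
    have a2 := cross hN h6.1 h4.2
    have b1 : 2*i < 2*k+1 := by exact_mod_cast a1
    have b2 : 2*k < 2*i+1 := by exact_mod_cast a2
    omega

end HaarAux

namespace HaarAux

lemma haar_support {m k : ℕ} {x : ℝ} (h : haar m k x ≠ 0) :
    (k:ℝ)/2^m ≤ x ∧ x < ((k:ℝ)+1)/2^m := by
  have hN : (0:ℝ) < 2^(m+1) := by positivity
  have e1 : (k:ℝ)/2^m = (2*k:ℝ)/2^(m+1) := by
    rw [pow_succ]; field_simp
  have e2 : ((k:ℝ)+1)/2^m = (2*k+2:ℝ)/2^(m+1) := by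
    rw [pow_succ]; field_simp
  unfold haar at h
  split_ifs at h with h1 h2
  · exact ⟨e1 ▸ le_trans (div_mono hN (by linarith)) h1.1, e2 ▸ h1.2⟩
  · exact ⟨e1 ▸ h2.1, e2 ▸ lt_of_lt_of_le h2.2 (div_mono hN (by linarith))⟩
  · exact absurd rfl h

lemma dyadic_trap {n m k : ℕ} (hnm : n + 1 ≤ m) (p : ℕ) {x y : ℝ}
    (hx1 : (k:ℝ)/2^m ≤ x) (hx2 : x < ((k:ℝ)+1)/2^m)
    (hy1 : (k:ℝ)/2^m ≤ y) (hy2 : y < ((k:ℝ)+1)/2^m)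
    (hp1 : (p:ℝ)/2^(n+1) ≤ x) (hp2 : x < ((p:ℝ)+1)/2^(n+1)) :
    (p:ℝ)/2^(n+1) ≤ y ∧ y < ((p:ℝ)+1)/2^(n+1) := by
  obtain ⟨t, rfl⟩ : ∃ t, m = n + 1 + t := ⟨m - (n+1), by omega⟩
  have hN : (0:ℝ) < 2^(n+1+t) := by positivity
  have h2m : ((2:ℝ))^(n+1+t) = 2^(n+1) * 2^t := by rw [pow_add]
  have key : ∀ a : ℝ, a / 2^(n+1) = (a * 2^t) / 2^(n+1+t) := by
    intro a
    rw [h2m, mul_comm ((2:ℝ)^(n+1)), ← div_div]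
    congr 1
    rw [mul_div_assoc, div_self (by positivity : ((2:ℝ)^t) ≠ 0), mul_one]
  have hpx : ((p:ℝ) * 2^t) / 2^(n+1+t) ≤ x := by rw [← key]; exact hp1
  have hpx2 : x < (((p:ℝ)+1) * 2^t) / 2^(n+1+t) := by rw [← key]; exact hp2
  have c1 : (p:ℝ) * 2^t < (k:ℝ) + 1 := cross hN hpx hx2
  have c2 : (k:ℝ) < ((p:ℝ)+1) * 2^t := cross hN hx1 hpx2
  have nat1 : p * 2^t ≤ k := by
    have : (↑(p * 2^t) : ℝ) < ↑(k + 1) := by push_cast; linarith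
    have := Nat.cast_lt.mp this
    omega
  have nat2 : k + 1 ≤ (p+1) * 2^t := by
    have : (↑k : ℝ) < ↑((p+1) * 2^t) := by push_cast; linarith
    have := Nat.cast_lt.mp this
    omega
  constructor
  · rw [key]
    refine le_trans (div_mono hN ?_) hy1
    exact_mod_cast nat1
  · rw [key]
    refine lt_of_lt_of_le hy2 (div_mono hN ?_)
    have : (↑(k+1) : ℝ) ≤ ↑((p+1) * 2^t) := Nat.cast_le.mpr nat2
    push_cast at this
    linarith

end HaarAux

namespace HaarAux

lemma haar_const {n m i k : ℕ} (hnm : n < m) {x y : ℝ}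
    (hx1 : (k:ℝ)/2^m ≤ x) (hx2 : x < ((k:ℝ)+1)/2^m)
    (hy1 : (k:ℝ)/2^m ≤ y) (hy2 : y < ((k:ℝ)+1)/2^m) :
    haar n i x = haar n i y := by
  have hm : n + 1 ≤ m := hnm
  have iff1 : ((2*(i:ℝ)+1)/2^(n+1) ≤ x ∧ x < (2*(i:ℝ)+2)/2^(n+1)) ↔
      ((2*(i:ℝ)+1)/2^(n+1) ≤ y ∧ y < (2*(i:ℝ)+2)/2^(n+1)) := by
    constructor
    · intro h
      have := dyadic_trap hm (2*i+1) hx1 hx2 hy1 hy2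
        (by push_cast; exact h.1) (by push_cast; convert h.2 using 2; ring)
      push_cast at this
      exact ⟨this.1, by convert this.2 using 2; ring⟩
    · intro h
      have := dyadic_trap hm (2*i+1) hy1 hy2 hx1 hx2
        (by push_cast; exact h.1) (by push_cast; convert h.2 using 2; ring)
      push_cast at this
      exact ⟨this.1, by convert this.2 using 2; ring⟩
  have iff2 : ((2*(i:ℝ))/2^(n+1) ≤ x ∧ x < (2*(i:ℝ)+1)/2^(n+1)) ↔
      ((2*(i:ℝ))/2^(n+1) ≤ y ∧ y < (2*(i:ℝ)+1)/2^(n+1)) := by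
    constructor
    · intro h
      have := dyadic_trap hm (2*i) hx1 hx2 hy1 hy2
        (by push_cast; exact h.1) (by push_cast; exact h.2)
      push_cast at this
      exact this
    · intro h
      have := dyadic_trap hm (2*i) hy1 hy2 hx1 hx2
        (by push_cast; exact h.1) (by push_cast; exact h.2)
      push_cast at this
      exact this
  unfold haar
  simp only [iff1, iff2]

lemma haar_mul_lt {n m i k : ℕ} (hnm : n < m) (hk : k < 2^m) (hi : i < 2^n) :
    ∫ x in Set.Ico (0:ℝ) 1, haar n i x * haar m k x = 0 := by
  set e : ℝ := (k:ℝ)/2^m with he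
  have hmem1 : (k:ℝ)/2^m ≤ e := le_refl _
  have hmem2 : e < ((k:ℝ)+1)/2^m := by
    rw [he, div_lt_div_iff_of_pos_right (by positivity)]
    linarith
  have heq : (fun x => haar n i x * haar m k x) = fun x => haar n i e * haar m k x := by
    funext x
    by_cases h0 : haar m k x = 0
    · rw [h0, mul_zero, mul_zero]
    · obtain ⟨h1, h2⟩ := haar_support h0
      rw [haar_const hnm h1 h2 hmem1 hmem2]
  rw [heq, MeasureTheory.integral_const_mul, integral_haar m k hk, mul_zero]

lemma haar_orthonormal (n i m k : ℕ) (hi : i < 2^n) (hk : k < 2^m) :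
    ∫ x in Set.Ico (0:ℝ) 1, haar n i x * haar m k x =
      if (n, i) = (m, k) then 1 else 0 := by
  rcases lt_trichotomy n m with h | rfl | h
  · rw [if_neg (by simp; omega), haar_mul_lt h hk hi]
  · by_cases hik : i = k
    · subst hik
      rw [if_pos rfl]
      simpa [sq] using integral_haar_sq n i hi
    · rw [if_neg (by simp [hik])]
      simp only [haar_mul_same n i k hik]
      simp
  · rw [if_neg (by simp; omega)]
    simp only [fun x => mul_comm (haar n i x) (haar m k x)]
    rw [haar_mul_lt h hi hk]

end HaarAux

namespace HaarAux

lemma haarOne_eqOn : Set.EqOn haarOne (fun _ => (1:ℝ)) (Set.Ico (0:ℝ) 1) := by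
  intro x hx
  simp only [Set.mem_Ico] at hx
  unfold haarOne
  rw [if_pos hx]

lemma integral_haarOne_sq : ∫ x in Set.Ico (0:ℝ) 1, haarOne x ^ 2 = 1 := by
  rw [setIntegral_congr_fun measurableSet_Ico
    (fun x hx => by simp only []; rw [haarOne_eqOn hx]; norm_num : Set.EqOn (fun x => haarOne x ^ 2)
      (fun _ => (1:ℝ)) (Set.Ico (0:ℝ) 1))]
  simp [Real.volume_Ico]

lemma integral_mul_haarOne {f : ℝ → ℝ}
    (h : ∫ x in Set.Ico (0:ℝ) 1, f x = 0) :
    ∫ x in Set.Ico (0:ℝ) 1, f x * haarOne x = 0 := by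
  rw [setIntegral_congr_fun measurableSet_Ico
    (fun x hx => by simp [haarOne_eqOn hx] : Set.EqOn (fun x => f x * haarOne x)
      f (Set.Ico (0:ℝ) 1))]
  exact h

lemma integral_sq_sum {ι : Type*} [DecidableEq ι] (s : Finset ι) (F : ι → ℝ → ℝ)
    (hN : ∀ p ∈ s, Nice (F p)) :
    ∫ x in Set.Ico (0:ℝ) 1, (∑ p ∈ s, F p x)^2 =
      ∑ p ∈ s, ∑ q ∈ s, ∫ x in Set.Ico (0:ℝ) 1, F p x * F q x := by
  have expand : ∀ x : ℝ, (∑ p ∈ s, F p x)^2 = ∑ p ∈ s, ∑ q ∈ s, F p x * F q x := by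
    intro x
    rw [sq, Finset.sum_mul_sum]
  simp only [expand]
  rw [integral_finset_sum s (fun p hp => MeasureTheory.integrable_finset_sum s
    (fun q hq => ((hN p hp).mul (hN q hq)).integrableOn))]
  exact Finset.sum_congr rfl fun p hp =>
    integral_finset_sum s (fun q hq => ((hN p hp).mul (hN q hq)).integrableOn)

lemma sum_orth {ι : Type*} [DecidableEq ι] (s : Finset ι) (A : ι → ℝ) (T : ι → ι → ℝ)
    (hdiag : ∀ p ∈ s, A p ≠ 0 → T p p = 1)
    (hoff : ∀ p ∈ s, ∀ q ∈ s, p ≠ q → A p ≠ 0 → A q ≠ 0 → T p q = 0) :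
    ∑ p ∈ s, ∑ q ∈ s, (A p * A q) * T p q = ∑ p ∈ s, (A p)^2 := by
  refine Finset.sum_congr rfl fun p hp => ?_
  rcases eq_or_ne (A p) 0 with h0 | h0
  · simp [h0]
  rw [Finset.sum_eq_single_of_mem p hp]
  · rw [hdiag p hp h0]; ring
  · intro q hq hqp
    rcases eq_or_ne (A q) 0 with hq0 | hq0
    · simp [hq0]
    · rw [hoff p hp q hq (Ne.symm hqp) h0 hq0, mul_zero]

end HaarAux

namespace HaarAux

lemma partner_partner (i : ℕ) : partner (partner i) = i := by
  unfold partner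
  split_ifs <;> omega

lemma partner_inj {a b : ℕ} (h : partner a = partner b) : a = b := by
  rw [← partner_partner a, h, partner_partner b]

lemma partner_lt {n i : ℕ} (hn : n ≠ 0) (hi : i < 2^n) : partner i < 2^n := by
  obtain ⟨n', rfl⟩ : ∃ n', n = n' + 1 := ⟨n - 1, by omega⟩
  have : 2^(n'+1) = 2 * 2^n' := by ring
  unfold partner
  split_ifs <;> omega

end HaarAux

namespace HaarAux

lemma Ssign_ne_zero {d j n i : ℕ} (h : Ssign d j n i ≠ 0) : n ≠ 0 := by
  intro hn
  apply h
  unfold Ssign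
  rw [if_neg (fun hc => hc.2 hn)]

lemma Ssign_sq (d j n i : ℕ) :
    (Ssign d j n i)^2 = if (j = 0 ∨ n % d = j - 1) ∧ n ≠ 0 then 1 else 0 := by
  unfold Ssign
  split_ifs <;> norm_num

lemma sum_Ssign_sq {d : ℕ} (hd : 1 ≤ d) (n i : ℕ) :
    ∑ j ∈ Finset.Icc 1 d, (Ssign d j n i)^2 = (Ssign d 0 n i)^2 := by
  simp only [Ssign_sq]
  rcases eq_or_ne n 0 with rfl | hn
  · simp
  · rw [if_pos (by simp [hn])]
    have : ∀ j ∈ Finset.Icc 1 d,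
        (if (j = 0 ∨ n % d = j - 1) ∧ n ≠ 0 then (1:ℝ) else 0) =
        if j = n % d + 1 then (1:ℝ) else 0 := by
      intro j hj
      rw [Finset.mem_Icc] at hj
      congr 1
      simp only [eq_iff_iff]
      constructor
      · rintro ⟨h1 | h1, -⟩
        · omega
        · omega
      · intro h
        exact ⟨Or.inr (by omega), hn⟩
    rw [Finset.sum_congr rfl this, Finset.sum_ite_eq' (Finset.Icc 1 d) (n % d + 1)]
    rw [if_pos]
    rw [Finset.mem_Icc]
    have := Nat.mod_lt n (show 0 < d by omega)
    omega

end HaarAux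

namespace HaarAux

lemma integral_Sexp_sq (d j : ℕ) (c : ℕ × ℕ →₀ ℝ)
    (hvalid : ∀ q ∈ c.support, q.2 < 2 ^ q.1) :
    ∫ x in Set.Ico (0:ℝ) 1, (Sexp d j c x)^2 =
      ∑ q ∈ c.support, (c q)^2 * (Ssign d j q.1 q.2)^2 := by
  classical
  set A : ℕ×ℕ → ℝ := fun q => c q * Ssign d j q.1 q.2 with hA
  have hSexp : Sexp d j c = fun x => ∑ q ∈ c.support, A q * haar q.1 (partner q.2) x := by
    funext x
    exact Finset.sum_congr rfl fun q _ => by rw [hA]; ring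
  rw [hSexp, integral_sq_sum _ _ (fun q _ => (haar_nice _ _).const_mul _)]
  have step : ∀ p q : ℕ×ℕ, (∫ x in Set.Ico (0:ℝ) 1,
      (A p * haar p.1 (partner p.2) x) * (A q * haar q.1 (partner q.2) x)) =
      (A p * A q) * ∫ x in Set.Ico (0:ℝ) 1,
        haar p.1 (partner p.2) x * haar q.1 (partner q.2) x := by
    intro p q
    rw [← MeasureTheory.integral_const_mul]
    congr 1; funext x; ring
  simp only [step]
  have hS : ∀ p : ℕ×ℕ, A p ≠ 0 → Ssign d j p.1 p.2 ≠ 0 := by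
    intro p hp hs
    exact hp (by rw [hA]; simp [hs])
  rw [sum_orth c.support A
    (fun p q => ∫ x in Set.Ico (0:ℝ) 1,
      haar p.1 (partner p.2) x * haar q.1 (partner q.2) x)
    (fun p hp hne => by
      show (∫ x in Set.Ico (0:ℝ) 1,
        haar p.1 (partner p.2) x * haar p.1 (partner p.2) x) = 1
      rw [haar_orthonormal _ _ _ _ (partner_lt (Ssign_ne_zero (hS p hne)) (hvalid p hp))
        (partner_lt (Ssign_ne_zero (hS p hne)) (hvalid p hp)), if_pos rfl])
    (fun p hp q hq hpq hne hne' => by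
      show (∫ x in Set.Ico (0:ℝ) 1,
        haar p.1 (partner p.2) x * haar q.1 (partner q.2) x) = 0
      rw [haar_orthonormal _ _ _ _ (partner_lt (Ssign_ne_zero (hS p hne)) (hvalid p hp))
        (partner_lt (Ssign_ne_zero (hS q hne')) (hvalid q hq)), if_neg]
      intro hcontra
      apply hpq
      rw [Prod.mk.injEq] at hcontra
      exact Prod.ext hcontra.1 (partner_inj hcontra.2))]
  exact Finset.sum_congr rfl fun q _ => by rw [hA]; rw [mul_pow]

end HaarAux

namespace HaarAux

variable {a : ℝ} {c : ℕ × ℕ →₀ ℝ}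

lemma h_nice (c : ℕ × ℕ →₀ ℝ) :
    Nice (fun x => ∑ q ∈ c.support, c q * haar q.1 q.2 x) :=
  Nice.finsetSum _ _ (fun q _ => (haar_nice q.1 q.2).const_mul _)

lemma integral_h_mul_nice (hvalid : ∀ q ∈ c.support, q.2 < 2 ^ q.1) (g : ℝ → ℝ)
    (hg : Nice g)
    (hval : ∀ q ∈ c.support, (∫ x in Set.Ico (0:ℝ) 1, haar q.1 q.2 x * g x) =
      (if q = ((0:ℕ),(0:ℕ)) then 1 else 0)) : True := trivial

lemma integral_h_sq (hvalid : ∀ q ∈ c.support, q.2 < 2 ^ q.1) :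
    ∫ x in Set.Ico (0:ℝ) 1, (∑ q ∈ c.support, c q * haar q.1 q.2 x)^2 =
      ∑ q ∈ c.support, (c q)^2 := by
  classical
  rw [integral_sq_sum _ _ (fun q _ => (haar_nice q.1 q.2).const_mul (c q))]
  have step : ∀ p q : ℕ×ℕ, (∫ x in Set.Ico (0:ℝ) 1,
      (c p * haar p.1 p.2 x) * (c q * haar q.1 q.2 x)) =
      (c p * c q) * ∫ x in Set.Ico (0:ℝ) 1, haar p.1 p.2 x * haar q.1 q.2 x := by
    intro p q
    rw [← MeasureTheory.integral_const_mul]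
    congr 1; funext x; ring
  simp only [step]
  rw [sum_orth c.support (fun q => c q)
    (fun p q => ∫ x in Set.Ico (0:ℝ) 1, haar p.1 p.2 x * haar q.1 q.2 x)
    (fun p hp _ => by
      show (∫ x in Set.Ico (0:ℝ) 1, haar p.1 p.2 x * haar p.1 p.2 x) = 1
      rw [haar_orthonormal _ _ _ _ (hvalid p hp) (hvalid p hp), if_pos rfl])
    (fun p hp q hq hpq _ _ => by
      show (∫ x in Set.Ico (0:ℝ) 1, haar p.1 p.2 x * haar q.1 q.2 x) = 0
      rw [haar_orthonormal _ _ _ _ (hvalid p hp) (hvalid q hq), if_neg]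
      intro hcontra
      rw [Prod.mk.injEq] at hcontra
      exact hpq (Prod.ext hcontra.1 hcontra.2))]

lemma integral_h_one (hvalid : ∀ q ∈ c.support, q.2 < 2 ^ q.1) :
    ∫ x in Set.Ico (0:ℝ) 1,
      haarOne x * (∑ q ∈ c.support, c q * haar q.1 q.2 x) = 0 := by
  rw [setIntegral_congr_fun measurableSet_Ico
    (fun x hx => by simp only []; rw [haarOne_eqOn hx, one_mul] :
      Set.EqOn (fun x => haarOne x * (∑ q ∈ c.support, c q * haar q.1 q.2 x))
        (fun x => ∑ q ∈ c.support, c q * haar q.1 q.2 x) (Set.Ico (0:ℝ) 1))]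
  rw [integral_finset_sum _ (fun (q : ℕ×ℕ) _ => ((haar_nice q.1 q.2).const_mul (c q)).integrableOn)]
  refine Finset.sum_eq_zero fun q hq => ?_
  rw [MeasureTheory.integral_const_mul, integral_haar _ _ (hvalid q hq), mul_zero]

lemma integral_h_haar00 (hvalid : ∀ q ∈ c.support, q.2 < 2 ^ q.1) :
    ∫ x in Set.Ico (0:ℝ) 1,
      (∑ q ∈ c.support, c q * haar q.1 q.2 x) * haar 0 0 x = c (0, 0) := by
  classical
  have expand : ∀ x : ℝ, (∑ q ∈ c.support, c q * haar q.1 q.2 x) * haar 0 0 x =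
      ∑ q ∈ c.support, c q * (haar q.1 q.2 x * haar 0 0 x) := by
    intro x
    rw [Finset.sum_mul]
    exact Finset.sum_congr rfl fun q _ => by ring
  simp only [expand]
  rw [integral_finset_sum _ (fun (q : ℕ×ℕ) _ =>
    (((haar_nice q.1 q.2).mul (haar_nice 0 0)).const_mul (c q)).integrableOn)]
  have step : ∀ q ∈ c.support, (∫ x in Set.Ico (0:ℝ) 1,
      c q * (haar q.1 q.2 x * haar 0 0 x)) = if q = ((0:ℕ),(0:ℕ)) then c q else 0 := by
    intro q hq
    rw [MeasureTheory.integral_const_mul,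
      haar_orthonormal _ _ _ _ (hvalid q hq) (by norm_num)]
    by_cases h : q = ((0:ℕ),(0:ℕ))
    · rw [if_pos h, if_pos (by rw [h]), mul_one]
    · rw [if_neg h, if_neg (fun hc => h (by rw [← hc])), mul_zero]
  rw [Finset.sum_congr rfl step, Finset.sum_ite_eq' c.support ((0:ℕ),(0:ℕ))]
  by_cases h : ((0:ℕ),(0:ℕ)) ∈ c.support
  · rw [if_pos h]
  · rw [if_neg h, eq_comm]
    exact Finsupp.notMem_support_iff.mp h

end HaarAux

namespace HaarAux

lemma integral_haarExp_sq (hvalid : ∀ q ∈ c.support, q.2 < 2 ^ q.1) :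
    ∫ x in Set.Ico (0:ℝ) 1, (haarExp a c x)^2 =
      a^2 + ∑ q ∈ c.support, (c q)^2 := by
  have expand : ∀ x : ℝ, (haarExp a c x)^2 =
      (a*a) * (haarOne x * haarOne x) +
        ((2*a) * (haarOne x * (∑ q ∈ c.support, c q * haar q.1 q.2 x)) +
          (∑ q ∈ c.support, c q * haar q.1 q.2 x) *
            (∑ q ∈ c.support, c q * haar q.1 q.2 x)) := by
    intro x; unfold haarExp; ring
  simp only [expand]
  have I23 : IntegrableOn (fun x =>
      (2*a) * (haarOne x * (∑ q ∈ c.support, c q * haar q.1 q.2 x)) +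
        (∑ q ∈ c.support, c q * haar q.1 q.2 x) *
          (∑ q ∈ c.support, c q * haar q.1 q.2 x)) (Set.Ico (0:ℝ) 1) :=
    (((haarOne_nice.mul (h_nice c)).const_mul (2*a)).integrableOn).add
      (((h_nice c).mul (h_nice c)).integrableOn)
  rw [integral_add (((haarOne_nice.mul haarOne_nice).const_mul (a*a)).integrableOn) I23,
    integral_add (((haarOne_nice.mul (h_nice c)).const_mul (2*a)).integrableOn)
      (((h_nice c).mul (h_nice c)).integrableOn),
    MeasureTheory.integral_const_mul, MeasureTheory.integral_const_mul]
  have g2 : ∫ x in Set.Ico (0:ℝ) 1, haarOne x * haarOne x = 1 := by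
    simp only [← sq]; exact integral_haarOne_sq
  have hh : ∫ x in Set.Ico (0:ℝ) 1,
      (∑ q ∈ c.support, c q * haar q.1 q.2 x) * (∑ q ∈ c.support, c q * haar q.1 q.2 x) =
      ∑ q ∈ c.support, (c q)^2 := by
    simp only [← sq]; exact integral_h_sq hvalid
  rw [g2, hh, integral_h_one hvalid]
  ring

lemma integral_haarExp_one (hvalid : ∀ q ∈ c.support, q.2 < 2 ^ q.1) :
    ∫ x in Set.Ico (0:ℝ) 1, haarExp a c x * haarOne x = a := by
  have expand : ∀ x : ℝ, haarExp a c x * haarOne x =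
      a * (haarOne x * haarOne x) +
        haarOne x * (∑ q ∈ c.support, c q * haar q.1 q.2 x) := by
    intro x; unfold haarExp; ring
  simp only [expand]
  rw [integral_add (((haarOne_nice.mul haarOne_nice).const_mul a).integrableOn)
    ((haarOne_nice.mul (h_nice c)).integrableOn),
    MeasureTheory.integral_const_mul, integral_h_one hvalid]
  have g2 : ∫ x in Set.Ico (0:ℝ) 1, haarOne x * haarOne x = 1 := by
    simp only [← sq]; exact integral_haarOne_sq
  rw [g2]; ring

lemma integral_haarExp_haar00 (hvalid : ∀ q ∈ c.support, q.2 < 2 ^ q.1) :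
    ∫ x in Set.Ico (0:ℝ) 1, haarExp a c x * haar 0 0 x = c (0, 0) := by
  have expand : ∀ x : ℝ, haarExp a c x * haar 0 0 x =
      a * (haarOne x * haar 0 0 x) +
        (∑ q ∈ c.support, c q * haar q.1 q.2 x) * haar 0 0 x := by
    intro x; unfold haarExp; ring
  simp only [expand]
  rw [integral_add (((haarOne_nice.mul (haar_nice 0 0)).const_mul a).integrableOn)
    (((h_nice c).mul (haar_nice 0 0)).integrableOn),
    MeasureTheory.integral_const_mul, integral_h_haar00 hvalid]
  have g0 : ∫ x in Set.Ico (0:ℝ) 1, haarOne x * haar 0 0 x = 0 := by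
    rw [setIntegral_congr_fun measurableSet_Ico
      (fun x hx => by simp only []; rw [haarOne_eqOn hx, one_mul] :
        Set.EqOn (fun x => haarOne x * haar 0 0 x) (haar 0 0) (Set.Ico (0:ℝ) 1))]
    exact integral_haar 0 0 (by norm_num)
  rw [g0]; ring

end HaarAux


/-- for every real-valued finite Haar expansion `f`,
`∑_{j=1}^d ‖𝒮_j f‖²_{L²(I₀)} = ‖𝒮₀ f‖²_{L²(I₀)} = ‖f‖²_{L²(I₀)} - ⟨f, h¹_{I₀}⟩² - ⟨f, h_{I₀}⟩²`. -/
theorem dyadic_riesz_norm_identity (d : ℕ) (hd : 1 ≤ d) (a : ℝ) (c : ℕ × ℕ →₀ ℝ)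
    (hvalid : ∀ q ∈ c.support, q.2 < 2 ^ q.1) :
    (∑ j ∈ Finset.Icc 1 d, ∫ x in Set.Ico (0 : ℝ) 1, (Sexp d j c x) ^ 2 =
      ∫ x in Set.Ico (0 : ℝ) 1, (Sexp d 0 c x) ^ 2) ∧
    (∫ x in Set.Ico (0 : ℝ) 1, (Sexp d 0 c x) ^ 2 =
      (∫ x in Set.Ico (0 : ℝ) 1, (haarExp a c x) ^ 2)
        - (∫ x in Set.Ico (0 : ℝ) 1, haarExp a c x * haarOne x) ^ 2
        - (∫ x in Set.Ico (0 : ℝ) 1, haarExp a c x * haar 0 0 x) ^ 2) := by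
  classical
  constructor
  · rw [Finset.sum_congr rfl (fun j _ => HaarAux.integral_Sexp_sq d j c hvalid),
      HaarAux.integral_Sexp_sq d 0 c hvalid, Finset.sum_comm]
    refine Finset.sum_congr rfl fun q _ => ?_
    rw [← Finset.mul_sum, HaarAux.sum_Ssign_sq hd]
  · rw [HaarAux.integral_Sexp_sq d 0 c hvalid, HaarAux.integral_haarExp_sq hvalid,
      HaarAux.integral_haarExp_one hvalid, HaarAux.integral_haarExp_haar00 hvalid]
    have hS0 : ∀ q ∈ c.support, (c q)^2 * (Ssign d 0 q.1 q.2)^2 =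
        (c q)^2 - (if q = ((0:ℕ),(0:ℕ)) then (c q)^2 else 0) := by
      intro q hq
      rw [HaarAux.Ssign_sq]
      by_cases h0 : q.1 = 0
      · have hq2 : q.2 = 0 := by
          have := hvalid q hq
          rw [h0] at this
          omega
        rw [if_neg (fun hc => hc.2 h0), if_pos (Prod.ext h0 hq2)]
        ring
      · rw [if_pos ⟨Or.inl rfl, h0⟩, if_neg (fun hc => h0 (by rw [hc]))]
        ring
    rw [Finset.sum_congr rfl hS0, Finset.sum_sub_distrib,
      Finset.sum_ite_eq' c.support ((0:ℕ),(0:ℕ)) (fun q => (c q)^2)]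
    by_cases h : ((0:ℕ),(0:ℕ)) ∈ c.support
    · rw [if_pos h]; ring
    · rw [if_neg h, Finsupp.notMem_support_iff.mp h]; ring
end

section
/- Let $\Phi^{\sigma}_{kd+m}=\sum_{p=1}^P\sum_{(\vec l^0,\dots,\vec l^k)}\alpha^{\sigma p}_{kd+m}(\vec l^0,\dots,\vec l^k)\,e^{i\langle\vec l^0,\vec\theta^0\rangle}\cdots e^{i\langle\vec l^k,\vec\theta^k\rangle}\,x_p$ be an $X$-valued trigonometric polynomial whose spectrum is finite, bounded by $B$ in each entry, and contained in the set where $l^k_m\neq0$ and $l^k_{m+1}=\dots=l^k_{d-1}=0$. Then there exist $A_0$ and $C$, depending only on $d$, $k$ and $B$, such that for every integer $A\ge A_0$, every $1\le j\le d$ and all $(\vec\theta^0,\dots,\vec\theta^k,\vec\eta)$: $\big\|D^j_{kd+m,A}(\vec\theta^0,\dots,\vec\theta^k,\vec\eta)\big\|_X \le \frac{C}{A}\sum_{p=1}^P\sum_{(\vec l^0,\dots,\vec l^k)}\big|\alpha^{\sigma p}_{kd+m}(\vec l^0,\dots,\vec l^k)\big|\,\|x_p\|_X$. -/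
open MeasureTheory

/-- The Riesz multiplier `m̃_j(n) = -i n_j / |n|` on `ℤ^d` (and `0` at `n = 0`). -/
noncomputable def rieszMult {d : ℕ} (j : Fin d) (n : Fin d → ℤ) : ℂ :=
  if n = 0 then 0
  else -Complex.I * (n j : ℂ) / (Real.sqrt (∑ i, ((n i : ℝ)) ^ 2) : ℂ)

/-- The frequency in `ℤ^d` of the modulated character: `ν(A, l)_i = ∑_s l^s_i A^{sd+i+1}`. -/
def modFreq {d k : ℕ} (A : ℕ) (l : Fin (k + 1) → Fin d → ℤ) : Fin d → ℤ :=
  fun i => ∑ s : Fin (k + 1), l s i * (A : ℤ) ^ ((s : ℕ) * d + (i : ℕ) + 1)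

/-- The frequency `(0, …, 0, l^k_m, 0, …, 0)` of the sliced multiplier `m̃_j^k`. -/
def slicedFreq {d k : ℕ} (m : Fin d) (l : Fin (k + 1) → Fin d → ℤ) : Fin d → ℤ :=
  fun i => if i = m then l (Fin.last k) m else 0


lemma sqrt_sum_sq_le {d : ℕ} (x : Fin d → ℝ) :
    Real.sqrt (∑ i, x i ^ 2) ≤ ∑ i, |x i| := by
  have h : ∑ i, x i ^ 2 ≤ (∑ i, |x i|) ^ 2 := by
    have := Finset.sum_sq_le_sq_sum_of_nonneg (s := Finset.univ)
      (f := fun i : Fin d => |x i|) (fun i _ => abs_nonneg _)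
    simpa [sq_abs] using this
  calc Real.sqrt (∑ i, x i ^ 2) ≤ Real.sqrt ((∑ i, |x i|) ^ 2) := Real.sqrt_le_sqrt h
    _ = ∑ i, |x i| := Real.sqrt_sq (Finset.sum_nonneg fun i _ => abs_nonneg _)

lemma abs_sqrt_sub_sqrt {d : ℕ} (u v : Fin d → ℝ) :
    |Real.sqrt (∑ i, u i ^ 2) - Real.sqrt (∑ i, v i ^ 2)| ≤ ∑ i, |u i - v i| := by
  set U : EuclideanSpace ℝ (Fin d) := WithLp.toLp 2 (fun i => u i)
  set V : EuclideanSpace ℝ (Fin d) := WithLp.toLp 2 (fun i => v i)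
  have hU : ‖U‖ = Real.sqrt (∑ i, u i ^ 2) := by
    rw [EuclideanSpace.norm_eq]; simp [U, Real.norm_eq_abs, sq_abs]
  have hV : ‖V‖ = Real.sqrt (∑ i, v i ^ 2) := by
    rw [EuclideanSpace.norm_eq]; simp [V, Real.norm_eq_abs, sq_abs]
  have hUV : ‖U - V‖ = Real.sqrt (∑ i, (u i - v i) ^ 2) := by
    rw [EuclideanSpace.norm_eq]; simp [U, V, Real.norm_eq_abs, sq_abs]
  calc |Real.sqrt (∑ i, u i ^ 2) - Real.sqrt (∑ i, v i ^ 2)| = |‖U‖ - ‖V‖| := by rw [hU, hV]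
    _ ≤ ‖U - V‖ := abs_norm_sub_norm_le U V
    _ = Real.sqrt (∑ i, (u i - v i) ^ 2) := hUV
    _ ≤ ∑ i, |u i - v i| := sqrt_sum_sq_le _

lemma ratio_est {d : ℕ} (hd : 1 ≤ d) (u v : Fin d → ℝ) (E : ℝ) (hE : 0 ≤ E)
    (hclose : ∀ i, |u i - v i| ≤ E)
    (hSpos : 0 < Real.sqrt (∑ i, v i ^ 2))
    (hS : 2 * d * E ≤ Real.sqrt (∑ i, v i ^ 2)) (j : Fin d) :
    |u j / Real.sqrt (∑ i, u i ^ 2) - v j / Real.sqrt (∑ i, v i ^ 2)|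
      ≤ 4 * d * E / Real.sqrt (∑ i, v i ^ 2) := by
  set R := Real.sqrt (∑ i, u i ^ 2) with hRdef
  set S := Real.sqrt (∑ i, v i ^ 2) with hSdef
  have hRS : |R - S| ≤ d * E := by
    calc |R - S| ≤ ∑ i, |u i - v i| := abs_sqrt_sub_sqrt u v
      _ ≤ ∑ _i : Fin d, E := Finset.sum_le_sum fun i _ => hclose i
      _ = d * E := by simp [mul_comm]
  have hR2 : S / 2 ≤ R := by
    have : S - R ≤ d * E := by
      have := abs_le.mp hRS; linarith [this.1]
    linarith
  have hRpos : 0 < R := lt_of_lt_of_le (by linarith) hR2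
  have hvj : |v j| ≤ S := by
    rw [← Real.sqrt_sq_eq_abs]
    apply Real.sqrt_le_sqrt
    exact Finset.single_le_sum (f := fun i => v i ^ 2) (fun i _ => sq_nonneg _) (Finset.mem_univ j)
  have hdr : (1:ℝ) ≤ d := Nat.one_le_cast.mpr hd
  have hnum : |u j * S - v j * R| ≤ 2 * d * E * S := by
    have h1 : u j * S - v j * R = (u j - v j) * S + v j * (S - R) := by ring
    rw [h1]
    calc |(u j - v j) * S + v j * (S - R)| ≤ |(u j - v j) * S| + |v j * (S - R)| := abs_add_le _ _
      _ = |u j - v j| * S + |v j| * |S - R| := by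
          rw [abs_mul, abs_mul, abs_of_pos hSpos]
      _ ≤ E * S + S * (d * E) := by
          have := abs_sub_comm S R
          gcongr
          · exact hclose j
          · rw [abs_sub_comm]; exact hRS
      _ ≤ 2 * d * E * S := by nlinarith [mul_nonneg (mul_nonneg (sub_nonneg.mpr hdr) hE) hSpos.le]
  have heq : u j / R - v j / S = (u j * S - v j * R) / (R * S) := by
    field_simp
  rw [heq, abs_div, abs_of_pos (mul_pos hRpos hSpos)]
  calc |u j * S - v j * R| / (R * S) ≤ 2 * d * E * S / (R * S) := by gcongr
    _ = 2 * d * E / R := by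
        field_simp
    _ ≤ 2 * d * E / (S / 2) := by gcongr
    _ = 4 * d * E / S := by
        rw [div_div_eq_mul_div, div_eq_div_iff (by positivity) hSpos.ne']
        ring

lemma key_est {d k B : ℕ} (hd : 1 ≤ d) (hB : 1 ≤ B) (m j : Fin d)
    (l : Fin (k + 1) → Fin d → ℤ)
    (hbd : ∀ s i, |l s i| ≤ (B : ℤ)) (hm : l (Fin.last k) m ≠ 0)
    (hz : ∀ i : Fin d, m < i → l (Fin.last k) i = 0)
    (A : ℕ) (hA : 2 * d * (k + 1) * B ≤ A) :
    ‖rieszMult j (modFreq A l) - rieszMult j (slicedFreq m l)‖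
      ≤ (4 * d * (k + 1) * B : ℝ) / A := by

  have hdr : (1 : ℝ) ≤ d := by exact_mod_cast hd
  have hBr : (1 : ℝ) ≤ B := by exact_mod_cast hB
  have hBpos : (0 : ℝ) < B := lt_of_lt_of_le one_pos hBr
  have hAR : (2 * d * (k + 1) * B : ℝ) ≤ A := by exact_mod_cast hA
  have hk1 : (1 : ℝ) ≤ (k : ℝ) + 1 := by linarith [Nat.cast_nonneg (α := ℝ) k]
  have p1 : (1 : ℝ) ≤ (d : ℝ) * ((k : ℝ) + 1) := by nlinarith
  have p2 : (1 : ℝ) ≤ (d : ℝ) * ((k : ℝ) + 1) * B := by nlinarith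
  have hA1 : (1 : ℝ) ≤ A := by nlinarith
  have hApos : (0 : ℝ) < A := lt_of_lt_of_le one_pos hA1
  set t : ℤ := l (Fin.last k) m with ht
  set u : Fin d → ℝ := fun i => ((modFreq A l i : ℤ) : ℝ) with hu
  set v : Fin d → ℝ := fun i => (A : ℝ) ^ (k * d + (m : ℕ) + 1) * ((slicedFreq m l i : ℤ) : ℝ)
    with hv
  set E : ℝ := ((k : ℝ) + 1) * B * (A : ℝ) ^ (k * d + (m : ℕ)) with hE
  have hpowpos : (0 : ℝ) < (A : ℝ) ^ (k * d + (m : ℕ)) := pow_pos hApos _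
  have hEpos : 0 < E := mul_pos (mul_pos (by linarith) hBpos) hpowpos
  -- per-term bound
  have hterm : ∀ (s : Fin (k + 1)) (i : Fin d), (s : ℕ) * d + (i : ℕ) + 1 ≤ k * d + (m : ℕ) →
      |(l s i : ℝ) * (A : ℝ) ^ ((s : ℕ) * d + (i : ℕ) + 1)|
        ≤ (B : ℝ) * (A : ℝ) ^ (k * d + (m : ℕ)) := by
    intro s i hexp
    rw [abs_mul, abs_pow, abs_of_pos hApos]
    apply mul_le_mul _ (pow_le_pow_right₀ hA1 hexp) (by positivity) (by positivity)
    have := hbd s i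
    rw [← Int.cast_abs]
    exact_mod_cast this
  -- coordinatewise closeness
  have hclose : ∀ i, |u i - v i| ≤ E := by
    intro i
    by_cases him : i = m
    · subst him
      have hexp : u i - v i = ∑ s : Fin k,
          (l s.castSucc i : ℝ) * (A : ℝ) ^ ((s : ℕ) * d + (i : ℕ) + 1) := by
        simp only [hu, hv, modFreq, slicedFreq, if_pos rfl]
        push_cast
        rw [Fin.sum_univ_castSucc]
        simp only [Fin.val_last, Fin.coe_castSucc]
        ring
      rw [hexp]
      calc |∑ s : Fin k, (l s.castSucc i : ℝ) * (A : ℝ) ^ ((s : ℕ) * d + (i : ℕ) + 1)|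
          ≤ ∑ s : Fin k, |(l s.castSucc i : ℝ) * (A : ℝ) ^ ((s : ℕ) * d + (i : ℕ) + 1)| :=
            Finset.abs_sum_le_sum_abs _ _
        _ ≤ ∑ _s : Fin k, (B : ℝ) * (A : ℝ) ^ (k * d + (i : ℕ)) := by
            apply Finset.sum_le_sum
            intro s _
            apply hterm
            have h1 : ((s.castSucc : Fin (k + 1)) : ℕ) = (s : ℕ) := rfl
            rw [h1]
            have h2 : ((s : ℕ) + 1) * d ≤ k * d := Nat.mul_le_mul_right d s.isLt
            have h3 : (s : ℕ) * d + d ≤ k * d := by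
              calc (s : ℕ) * d + d = ((s : ℕ) + 1) * d := by ring
                _ ≤ k * d := h2
            omega
        _ = (k : ℝ) * ((B : ℝ) * (A : ℝ) ^ (k * d + (i : ℕ))) := by
            rw [Finset.sum_const, Finset.card_univ, Fintype.card_fin, nsmul_eq_mul]
        _ ≤ E := by
            rw [hE]
            have h9 := mul_pos hBpos hpowpos
            linarith
    · have hvz : v i = 0 := by rw [hv]; simp [slicedFreq, him]
      rw [hvz, sub_zero]
      show |((modFreq A l i : ℤ) : ℝ)| ≤ E
      have hexp : ((modFreq A l i : ℤ) : ℝ) = ∑ s : Fin (k + 1),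
          (l s i : ℝ) * (A : ℝ) ^ ((s : ℕ) * d + (i : ℕ) + 1) := by
        simp only [modFreq]
        push_cast
        ring
      rw [hexp]
      calc |∑ s : Fin (k + 1), (l s i : ℝ) * (A : ℝ) ^ ((s : ℕ) * d + (i : ℕ) + 1)|
          ≤ ∑ s : Fin (k + 1), |(l s i : ℝ) * (A : ℝ) ^ ((s : ℕ) * d + (i : ℕ) + 1)| :=
            Finset.abs_sum_le_sum_abs _ _
        _ ≤ ∑ _s : Fin (k + 1), (B : ℝ) * (A : ℝ) ^ (k * d + (m : ℕ)) := by
            apply Finset.sum_le_sum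
            intro s _
            rcases lt_or_gt_of_ne (fun h => him (Fin.ext h)) with hlt | hgt
            · apply hterm
              have h2 : (s : ℕ) * d ≤ k * d :=
                Nat.mul_le_mul_right d (Nat.lt_succ_iff.mp s.isLt)
              omega
            · by_cases hs : (s : ℕ) = k
              · have hsl : s = Fin.last k := Fin.ext hs
                have hls : l s i = 0 := by rw [hsl]; exact hz i (Fin.lt_def.mpr hgt)
                rw [hls]
                simp only [Int.cast_zero, zero_mul, abs_zero]
                positivity
              · apply hterm
                have hsk : (s : ℕ) + 1 ≤ k := by
                  have := Nat.lt_succ_iff.mp s.isLt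
                  omega
                have h2 : ((s : ℕ) + 1) * d ≤ k * d := Nat.mul_le_mul_right d hsk
                have h3 : (i : ℕ) + 1 ≤ d := i.isLt
                have h4 : (s : ℕ) * d + d ≤ k * d := by
                  calc (s : ℕ) * d + d = ((s : ℕ) + 1) * d := by ring
                    _ ≤ k * d := h2
                omega
        _ = ((k : ℝ) + 1) * ((B : ℝ) * (A : ℝ) ^ (k * d + (m : ℕ))) := by
            rw [Finset.sum_const, Finset.card_univ, Fintype.card_fin, nsmul_eq_mul]
            push_cast
            ring
        _ = E := by rw [hE]; ring
  -- the sliced vector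
  have htabs : (1 : ℝ) ≤ |(t : ℝ)| := by
    rw [← Int.cast_abs]
    exact_mod_cast Int.one_le_abs hm
  have hvm : ∀ i, v i = if i = m then (A : ℝ) ^ (k * d + (m : ℕ) + 1) * (t : ℝ) else 0 := by
    intro i
    rw [hv]
    simp only [slicedFreq]
    by_cases him : i = m <;> simp [him, ← ht]
  have hsum : ∑ i, v i ^ 2 = ((A : ℝ) ^ (k * d + (m : ℕ) + 1) * (t : ℝ)) ^ 2 := by
    rw [Finset.sum_eq_single m]
    · rw [hvm m, if_pos rfl]
    · intro b _ hb; rw [hvm b, if_neg hb]; ring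
    · intro h; exact absurd (Finset.mem_univ m) h
  have hSval : Real.sqrt (∑ i, v i ^ 2) = (A : ℝ) ^ (k * d + (m : ℕ) + 1) * |(t : ℝ)| := by
    rw [hsum, Real.sqrt_sq_eq_abs, abs_mul, abs_of_nonneg (by positivity)]
  have hSlb : (A : ℝ) ^ (k * d + (m : ℕ)) * (A : ℝ) ≤ Real.sqrt (∑ i, v i ^ 2) := by
    rw [hSval, pow_succ]
    have h5 := mul_le_mul_of_nonneg_left htabs
      (by positivity : (0 : ℝ) ≤ (A : ℝ) ^ (k * d + (m : ℕ)) * A)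
    linarith
  have hSpos : 0 < Real.sqrt (∑ i, v i ^ 2) :=
    lt_of_lt_of_le (by positivity) hSlb
  have hS2dE : 2 * (d : ℝ) * E ≤ (A : ℝ) ^ (k * d + (m : ℕ)) * (A : ℝ) := by
    rw [hE]
    have h9 := mul_le_mul_of_nonneg_right hAR hpowpos.le
    linarith
  have hS : 2 * d * E ≤ Real.sqrt (∑ i, v i ^ 2) := le_trans hS2dE hSlb
  have hmain := ratio_est hd u v E hEpos.le hclose hSpos hS j
  -- nonvanishing
  have hmodne : modFreq A l ≠ 0 := by
    intro h0
    have hum : u m = 0 := by rw [hu]; simp [h0]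
    have hcm := hclose m
    rw [hum, zero_sub, abs_neg, hvm m, if_pos rfl] at hcm
    have hvml : (A : ℝ) ^ (k * d + (m : ℕ)) * (A : ℝ)
        ≤ |(A : ℝ) ^ (k * d + (m : ℕ) + 1) * (t : ℝ)| := by
      rw [abs_mul, abs_of_nonneg (by positivity : (0 : ℝ) ≤ (A : ℝ) ^ (k * d + (m : ℕ) + 1)),
        pow_succ]
      have h5 := mul_le_mul_of_nonneg_left htabs
        (by positivity : (0 : ℝ) ≤ (A : ℝ) ^ (k * d + (m : ℕ)) * A)
      linarith
    have hEA : E < (A : ℝ) ^ (k * d + (m : ℕ)) * (A : ℝ) := by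
      rw [hE]
      have hq : (0 : ℝ) < ((k : ℝ) + 1) * B := mul_pos (by linarith) hBpos
      have h7 : ((k : ℝ) + 1) * (B : ℝ) ≤ (2 * (d : ℝ) - 1) * (((k : ℝ) + 1) * B) :=
        le_mul_of_one_le_left hq.le (by linarith)
      have h6 : ((k : ℝ) + 1) * B < A := by linarith
      have h8 := mul_lt_mul_of_pos_right h6 hpowpos
      linarith
    linarith
  have hslne : slicedFreq m l ≠ 0 := by
    intro h0
    have h1 := congrFun h0 m
    simp [slicedFreq] at h1
    exact hm h1
  -- rewrite the Riesz multipliers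
  have h1 : rieszMult j (modFreq A l)
      = -Complex.I * ((u j / Real.sqrt (∑ i, u i ^ 2) : ℝ) : ℂ) := by
    simp only [rieszMult, if_neg hmodne]
    simp only [hu]
    push_cast
    ring
  set w : Fin d → ℝ := fun i => ((slicedFreq m l i : ℤ) : ℝ) with hw
  have h2 : rieszMult j (slicedFreq m l)
      = -Complex.I * ((w j / Real.sqrt (∑ i, w i ^ 2) : ℝ) : ℂ) := by
    simp only [rieszMult, if_neg hslne]
    simp only [hw]
    push_cast
    ring
  have hwv : w j / Real.sqrt (∑ i, w i ^ 2) = v j / Real.sqrt (∑ i, v i ^ 2) := by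
    have hvw : ∀ i, v i = (A : ℝ) ^ (k * d + (m : ℕ) + 1) * w i := fun i => rfl
    have hsw : Real.sqrt (∑ i, v i ^ 2)
        = (A : ℝ) ^ (k * d + (m : ℕ) + 1) * Real.sqrt (∑ i, w i ^ 2) := by
      have hsum2 : ∑ i, v i ^ 2 = ((A : ℝ) ^ (k * d + (m : ℕ) + 1)) ^ 2 * ∑ i, w i ^ 2 := by
        rw [Finset.mul_sum]
        exact Finset.sum_congr rfl fun i _ => by rw [hvw i]; ring
      rw [hsum2, Real.sqrt_mul (by positivity), Real.sqrt_sq (by positivity)]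
    rw [hsw, hvw j, mul_div_mul_left _ _
      (by positivity : ((A : ℝ) ^ (k * d + (m : ℕ) + 1)) ≠ 0)]
  have hdiff : rieszMult j (modFreq A l) - rieszMult j (slicedFreq m l)
      = -Complex.I * ((u j / Real.sqrt (∑ i, u i ^ 2)
          - v j / Real.sqrt (∑ i, v i ^ 2) : ℝ) : ℂ) := by
    rw [h1, h2, hwv]
    push_cast
    ring
  rw [hdiff, norm_mul, Complex.norm_real, Real.norm_eq_abs]
  simp only [norm_neg, Complex.norm_I, one_mul]
  have hAne : (A : ℝ) ≠ 0 := hApos.ne'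
  have hpowne : (A : ℝ) ^ (k * d + (m : ℕ)) ≠ 0 := hpowpos.ne'
  calc |u j / Real.sqrt (∑ i, u i ^ 2) - v j / Real.sqrt (∑ i, v i ^ 2)|
      ≤ 4 * d * E / Real.sqrt (∑ i, v i ^ 2) := hmain
    _ ≤ 4 * d * E / ((A : ℝ) ^ (k * d + (m : ℕ)) * (A : ℝ)) :=
        div_le_div_of_nonneg_left (mul_nonneg (by positivity) hEpos.le) (by positivity) hSlb
    _ = (4 * d * (k + 1) * B : ℝ) / A := by
        rw [hE]
        field_simp
/-- for an `X`-valued trigonometric polynomial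
`Φ = ∑_p ∑_l α_p(l) e^{i⟨l,θ⟩} x_p` on `(𝕋^d)^{k+1}`, with spectrum bounded by `B` and
contained in `{l : l^k_m ≠ 0, l^k_{m+1} = ⋯ = l^k_{d-1} = 0}`, the difference
`D^j_{kd+m,A}(θ, η) = R̃_{j,η}[Φ(θ + A η)] - (H̃_j^k Φ)(θ + A η)
 = ∑_p ∑_l (m̃_j(ν(A,l)) - m̃_j(slicedFreq l)) α_p(l) e^{i⟨l,θ⟩ + i⟨ν(A,l),η⟩} x_p`
satisfies, for `A ≥ A₀` with `A₀, C` depending only on `d`, `k`, `B`: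
`‖D‖_X ≤ (C/A) ∑_p ∑_l |α_p(l)| ‖x_p‖`. -/
theorem modulated_riesz_difference_bound (d k B : ℕ) (hd : 1 ≤ d) (hB : 1 ≤ B) :
    ∃ (A₀ : ℕ) (C : ℝ),
      ∀ (X : Type*) [NormedAddCommGroup X] [NormedSpace ℂ X]
        (m : Fin d) (P : ℕ) (x : Fin P → X)
        (α : Fin P → ((Fin (k + 1) → Fin d → ℤ) →₀ ℂ)),
        (∀ (p : Fin P) (l : Fin (k + 1) → Fin d → ℤ), l ∈ (α p).support →
          (∀ (s : Fin (k + 1)) (i : Fin d), |l s i| ≤ (B : ℤ)) ∧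
          l (Fin.last k) m ≠ 0 ∧
          (∀ i : Fin d, m < i → l (Fin.last k) i = 0)) →
        ∀ A : ℕ, A₀ ≤ A → ∀ j : Fin d,
          ∀ (θ : Fin (k + 1) → Fin d → ℝ) (η : Fin d → ℝ),
            ‖∑ p : Fin P, ∑ l ∈ (α p).support,
                ((rieszMult j (modFreq A l) - rieszMult j (slicedFreq m l)) *
                  Complex.exp (Complex.I *
                    ((∑ s, ∑ i, (l s i : ℂ) * (θ s i : ℂ)) +
                      ∑ i, (modFreq A l i : ℂ) * (η i : ℂ))) *
                  α p l) • x p‖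
              ≤ C / A * ∑ p : Fin P, ∑ l ∈ (α p).support, ‖α p l‖ * ‖x p‖ := by
  classical
  refine ⟨2 * d * (k + 1) * B, (4 * d * (k + 1) * B : ℝ), ?_⟩
  intro X _ _ m P x α hspec A hA j θ η
  have hCA : (0 : ℝ) ≤ (4 * d * (k + 1) * B : ℝ) / A := by positivity
  calc ‖∑ p : Fin P, ∑ l ∈ (α p).support,
          ((rieszMult j (modFreq A l) - rieszMult j (slicedFreq m l)) *
            Complex.exp (Complex.I *
              ((∑ s, ∑ i, (l s i : ℂ) * (θ s i : ℂ)) +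
                ∑ i, (modFreq A l i : ℂ) * (η i : ℂ))) *
            α p l) • x p‖
      ≤ ∑ p : Fin P, ∑ l ∈ (α p).support,
          ‖((rieszMult j (modFreq A l) - rieszMult j (slicedFreq m l)) *
            Complex.exp (Complex.I *
              ((∑ s, ∑ i, (l s i : ℂ) * (θ s i : ℂ)) +
                ∑ i, (modFreq A l i : ℂ) * (η i : ℂ))) *
            α p l) • x p‖ := by
        refine le_trans (norm_sum_le _ _) ?_
        exact Finset.sum_le_sum fun p _ => norm_sum_le _ _
    _ ≤ ∑ p : Fin P, ∑ l ∈ (α p).support,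
          (4 * d * (k + 1) * B : ℝ) / A * (‖α p l‖ * ‖x p‖) := by
        refine Finset.sum_le_sum fun p _ => Finset.sum_le_sum fun l hl => ?_
        obtain ⟨hbd, hm, hz⟩ := hspec p l hl
        have hD : ‖rieszMult j (modFreq A l) - rieszMult j (slicedFreq m l)‖
            ≤ (4 * d * (k + 1) * B : ℝ) / A := by
          exact key_est hd hB m j l hbd hm hz A hA
        have hz1 : ((∑ s, ∑ i, (l s i : ℂ) * (θ s i : ℂ)) +
              ∑ i, (modFreq A l i : ℂ) * (η i : ℂ))
            = ((((∑ s, ∑ i, (l s i : ℝ) * θ s i) +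
                ∑ i, ((modFreq A l i : ℤ) : ℝ) * η i : ℝ)) : ℂ) := by
          push_cast
          ring
        have hexp1 : ‖Complex.exp (Complex.I *
            ((∑ s, ∑ i, (l s i : ℂ) * (θ s i : ℂ)) +
              ∑ i, (modFreq A l i : ℂ) * (η i : ℂ)))‖ = 1 := by
          rw [hz1, mul_comm, Complex.norm_exp_ofReal_mul_I]
        rw [norm_smul, norm_mul, norm_mul, hexp1, mul_one]
        calc ‖rieszMult j (modFreq A l) - rieszMult j (slicedFreq m l)‖ * ‖(α p l : ℂ)‖ * ‖x p‖
            ≤ (4 * d * (k + 1) * B : ℝ) / A * ‖(α p l : ℂ)‖ * ‖x p‖ := by gcongr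
          _ = (4 * d * (k + 1) * B : ℝ) / A * (‖(α p l : ℂ)‖ * ‖x p‖) := by ring
    _ = (4 * d * (k + 1) * B : ℝ) / A *
          ∑ p : Fin P, ∑ l ∈ (α p).support, ‖α p l‖ * ‖x p‖ := by
        rw [Finset.mul_sum]
        exact Finset.sum_congr rfl fun p _ => (Finset.mul_sum _ _ _).symm
end
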